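/- arXiv:1508.03995 — 4 statements merged into one kernel-verified Lean document; each statement's English description precedes it below -/
import Mathlib

section
/- Let 𝒜 be a Boolean algebra and W a Banach space with a mixed norm over a Dedekind σ-complete vector lattice F (so W carries an F-valued vector norm ⌊·⌋ and the norm |||w||| = ‖⌊w⌋‖). Then every almost dividing finitely additive measure μ : 𝒜 → W is order dividing: for every x ∈ 𝒜 there is a sequence of decompositions x = yₙ ⊔ zₙ (yₙ ∧ zₙ = 0, yₙ ∨ zₙ = x) such that μ(yₙ) − μ(zₙ) order-converges to 0 in the sense that ⌊μ(yₙ) − μ(zₙ)⌋ ≤ uₙ for some sequence uₙ ↓ 0 in F. -/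
/-- A vector norm on `V` with values in the vector lattice `E`
(making `(V, E)` a lattice-normed space). -/
structure VectorNorm (V E : Type*) [AddCommGroup V] [Module ℝ V]
    [AddCommGroup E] [Lattice E] [Module ℝ E] where
  N : V → E
  nonneg : ∀ v, 0 ≤ N v
  eq_zero_iff : ∀ v, N v = 0 ↔ v = 0
  add_le : ∀ v w, N (v + w) ≤ N v + N w
  smul_eq : ∀ (r : ℝ) (v : V), N (r • v) = |r| • N v

/-- every almost dividing measure into a Banach space with mixed norm
over a Dedekind σ-complete (Banach lattice) `F` is order dividing, witnessed by a
sequence of decompositions with `⌊μ yₙ - μ zₙ⌋ ≤ uₙ ↓ 0`. -/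
theorem almostDividing_orderDividing {A : Type*} [BooleanAlgebra A]
    {W F : Type*} [AddCommGroup W] [Module ℝ W]
    [NormedAddCommGroup F] [Lattice F] [HasSolidNorm F] [IsOrderedAddMonoid F] [Module ℝ F] [CompleteSpace F]
    (nv : VectorNorm W F)
    -- `F` is Dedekind σ-complete
    (hσ : ∀ s : ℕ → F, (∃ b : F, ∀ n, s n ≤ b) → ∃ a : F, IsLUB (Set.range s) a)
    -- `W` is a Banach space with the mixed norm `|||w||| = ‖⌊w⌋‖`
    (hWcomplete : ∀ w : ℕ → W,
      (∀ ε : ℝ, 0 < ε → ∃ k : ℕ, ∀ m, k ≤ m → ∀ n, k ≤ n → ‖nv.N (w m - w n)‖ < ε) →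
      ∃ l : W, Filter.Tendsto (fun n => ‖nv.N (w n - l)‖) Filter.atTop (nhds 0))
    (μ : A → W)
    (hadd : ∀ x y : A, x ⊓ y = ⊥ → μ (x ⊔ y) = μ x + μ y)
    (halmost : ∀ x : A, ∀ ε : ℝ, 0 < ε →
      ∃ y z : A, y ⊓ z = ⊥ ∧ y ⊔ z = x ∧ ‖nv.N (μ y - μ z)‖ < ε) :
    ∀ x : A, ∃ (y z : ℕ → A) (u : ℕ → F),
      (∀ n, y n ⊓ z n = ⊥ ∧ y n ⊔ z n = x) ∧
      (∀ m n : ℕ, m ≤ n → u n ≤ u m) ∧ IsGLB (Set.range u) 0 ∧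
      ∀ n, nv.N (μ (y n) - μ (z n)) ≤ u n := by
  intro x
  have hchoice : ∀ n : ℕ, ∃ y z : A, y ⊓ z = ⊥ ∧ y ⊔ z = x ∧
      ‖nv.N (μ y - μ z)‖ < (1/2 : ℝ) ^ n := fun n =>
    halmost x ((1/2 : ℝ) ^ n) (by positivity)
  choose y z hyz hsup hnorm using hchoice
  set g : ℕ → F := fun k => nv.N (μ (y k) - μ (z k)) with hg_def
  have hg0 : ∀ k, 0 ≤ g k := fun k => nv.nonneg _
  have hgsum : Summable g := by
    apply Summable.of_norm_bounded (g := fun k => (1/2 : ℝ) ^ k) summable_geometric_two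
    exact fun k => (hnorm k).le
  set u : ℕ → F := fun n => ∑' k, g (k + n) with hu_def
  have husum : ∀ n, Summable fun k => g (k + n) := fun n =>
    (summable_nat_add_iff n).2 hgsum
  have hu0 : ∀ n, 0 ≤ u n := fun n => tsum_nonneg (fun k => hg0 _)
  have hrec : ∀ n, u n = g n + u (n + 1) := by
    intro n
    have := Summable.tsum_eq_zero_add (husum n)
    simpa [show ∀ k, k + 1 + n = k + (n + 1) from fun k => by omega] using this
  have hglen : ∀ n, g n ≤ u n := fun n => by
    rw [hrec n]; exact le_add_of_nonneg_right (hu0 (n + 1))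
  have hanti : ∀ m n : ℕ, m ≤ n → u n ≤ u m := by
    have : ∀ n, u (n + 1) ≤ u n := fun n => by
      rw [hrec n]; exact le_add_of_nonneg_left (hg0 n)
    intro m n h
    exact antitone_nat_of_succ_le this h
  have hgeo : ∀ n : ℕ, Summable fun k => (1/2 : ℝ) ^ (k + n) :=
    fun n => (summable_nat_add_iff n).2 summable_geometric_two
  have hnorms : ∀ n : ℕ, Summable fun k => ‖g (k + n)‖ := fun n =>
    Summable.of_nonneg_of_le (fun k => norm_nonneg _)
      (fun k => (hnorm (k + n)).le) (hgeo n)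
  have htend : Filter.Tendsto u Filter.atTop (nhds 0) := by
    have hb : ∀ n, ‖u n‖ ≤ 2 * (1/2 : ℝ) ^ n := by
      intro n
      calc ‖u n‖ ≤ ∑' k, ‖g (k + n)‖ := norm_tsum_le_tsum_norm (hnorms n)
        _ ≤ ∑' k, (1/2 : ℝ) ^ (k + n) := by
            exact Summable.tsum_le_tsum (fun k => (hnorm (k + n)).le) (hnorms n) (hgeo n)
        _ = 2 * (1/2 : ℝ) ^ n := by
            simp only [pow_add]
            rw [tsum_mul_right, tsum_geometric_two]
    refine squeeze_zero_norm hb ?_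
    have : Filter.Tendsto (fun n : ℕ => (1/2 : ℝ) ^ n) Filter.atTop (nhds 0) := by
      apply tendsto_pow_atTop_nhds_zero_of_lt_one <;> norm_num
    simpa using this.const_mul 2
  refine ⟨y, z, u, fun n => ⟨hyz n, hsup n⟩, hanti, ?_, hglen⟩
  constructor
  · rintro _ ⟨n, rfl⟩; exact hu0 n
  · intro b hb
    have : ∀ n, b ≤ u n := fun n => hb ⟨n, rfl⟩
    exact le_of_tendsto_of_tendsto' tendsto_const_nhds htend this
end

section
/- Let 𝒜 be a Boolean algebra and (W, F) a Banach space with mixed norm where F is an order continuous Banach lattice. Then a finitely additive measure μ : 𝒜 → W is order dividing if and only if it is almost dividing. -/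
/-- `le` is a directed preorder relation on a nonempty index type. -/
def DirectedRel {D : Type*} (le : D → D → Prop) : Prop :=
  Nonempty D ∧ (∀ a, le a a) ∧ (∀ a b c, le a b → le b c → le a c) ∧
    ∀ a b : D, ∃ c, le a c ∧ le b c

/-- `(bo)`-convergence of a net `v : D → V` to `w` in the lattice-normed space `(V, E)`:
there is a decreasing net `e : G → E` with infimum `0` such that for each `g`
eventually `⌊w - v a⌋ ≤ e g`. -/
def BoNetConv {V E : Type*} [AddCommGroup V] [Module ℝ V]
    [AddCommGroup E] [Lattice E] [Module ℝ E] (nv : VectorNorm V E)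
    {D : Type*} (le : D → D → Prop) (v : D → V) (w : V) : Prop :=
  ∃ (G : Type) (leG : G → G → Prop), DirectedRel leG ∧
    ∃ e : G → E, (∀ g g' : G, leG g g' → e g' ≤ e g) ∧ IsGLB (Set.range e) 0 ∧
      ∀ g : G, ∃ a₀ : D, ∀ a : D, le a₀ a → nv.N (w - v a) ≤ e g

/-- The measure `μ : A → W` is order dividing: every `x` admits a net of
decompositions `x = y_α ⊔ z_α` with `μ (y_α) - μ (z_α)` `(bo)`-converging to `0`. -/
def OrderDividing {A W F : Type*} [BooleanAlgebra A] [AddCommGroup W] [Module ℝ W]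
    [AddCommGroup F] [Lattice F] [Module ℝ F] (nv : VectorNorm W F) (μ : A → W) : Prop :=
  ∀ x : A, ∃ (D : Type) (le : D → D → Prop), DirectedRel le ∧
    ∃ y z : D → A, (∀ α : D, y α ⊓ z α = ⊥ ∧ y α ⊔ z α = x) ∧
      BoNetConv nv le (fun α => μ (y α) - μ (z α)) 0

private theorem bo_aux {F : Type*} [NormedAddCommGroup F] [Lattice F] [IsOrderedAddMonoid F]
    [HasSolidNorm F] [CompleteSpace F]
    (f : ℕ → F) (hnn : ∀ n, 0 ≤ f n) (hb : ∀ n, ‖f n‖ ≤ (1/2:ℝ)^n) :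
    ∃ e : ℕ → F, (∀ g g' : ℕ, g ≤ g' → e g' ≤ e g) ∧ IsGLB (Set.range e) 0 ∧
      ∀ g a : ℕ, g ≤ a → f a ≤ e g := by
  have hsum : Summable f := by
    apply Summable.of_norm_bounded (summable_geometric_of_lt_one (by norm_num) (by norm_num)) hb
  have hsumk : ∀ k, Summable (fun n => f (n + k)) := fun k => (summable_nat_add_iff k).2 hsum
  refine ⟨fun k => ∑' n, f (n + k), ?_, ?_, ?_⟩
  · intro g g' hgg'
    induction g' with
    | zero => simp_all
    | succ m ih =>
      rcases Nat.lt_or_ge g (m+1) with h | h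
      · have step : (∑' n, f (n + (m+1))) ≤ ∑' n, f (n + m) := by
          have h0 : (∑' n, f (n + m)) = f (0 + m) + ∑' n, f ((n + 1) + m) :=
            Summable.tsum_eq_zero_add (hsumk m)
          have : (fun n => f ((n+1) + m)) = fun n => f (n + (m+1)) := by
            funext n; congr 1; omega
          rw [this] at h0
          rw [h0]
          exact le_add_of_nonneg_left (hnn _)
        exact step.trans (ih (by omega))
      · have : g = m + 1 := by omega
        subst this; exact le_rfl
  · constructor
    · rintro _ ⟨k, rfl⟩
      exact tsum_nonneg fun n => hnn _
    · intro b hb'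
      have hnorm : ∀ k : ℕ, ‖(∑' n, f (n + k))‖ ≤ 2 * (1/2:ℝ)^k := by
        intro k
        have hgs : Summable (fun n : ℕ => (1/2:ℝ)^(n+k)) :=
          (summable_geometric_of_lt_one (by norm_num) (by norm_num)).comp_injective
            (add_left_injective k)
        have hns : Summable (fun n => ‖f (n + k)‖) :=
          Summable.of_nonneg_of_le (fun n => norm_nonneg _) (fun n => hb _) hgs
        calc ‖(∑' n, f (n + k))‖ ≤ ∑' n, ‖f (n + k)‖ := norm_tsum_le_tsum_norm hns
          _ ≤ ∑' n : ℕ, (1/2:ℝ)^(n+k) := Summable.tsum_le_tsum (fun n => hb _) hns hgs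
          _ = ∑' n : ℕ, (1/2:ℝ)^n * (1/2:ℝ)^k := by simp [pow_add]
          _ = (∑' n : ℕ, (1/2:ℝ)^n) * (1/2:ℝ)^k := tsum_mul_right
          _ = 2 * (1/2:ℝ)^k := by rw [tsum_geometric_of_lt_one (by norm_num) (by norm_num)]; norm_num
      have htend : Filter.Tendsto (fun k => ∑' n, f (n + k)) Filter.atTop (nhds 0) := by
        rw [tendsto_zero_iff_norm_tendsto_zero]
        apply squeeze_zero (fun k => norm_nonneg _) hnorm
        have : Filter.Tendsto (fun k : ℕ => (1/2:ℝ)^k) Filter.atTop (nhds 0) :=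
          tendsto_pow_atTop_nhds_zero_of_lt_one (by norm_num) (by norm_num)
        simpa using this.const_mul 2
      exact ge_of_tendsto htend (Filter.Eventually.of_forall fun k => hb' ⟨k, rfl⟩)
  · intro g a hga
    have : f a = f ((a - g) + g) := by congr 1; omega
    rw [this]
    exact Summable.le_tsum (hsumk g) (a - g) (fun j _ => hnn _)

/-- for a Banach space with mixed norm over an order continuous
Banach lattice `F`, a measure is order dividing iff it is almost dividing. -/
theorem orderDividing_iff_almostDividing {A : Type*} [BooleanAlgebra A]
    {W F : Type*} [AddCommGroup W] [Module ℝ W]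
    [NormedAddCommGroup F] [Lattice F] [IsOrderedAddMonoid F] [HasSolidNorm F]
    [Module ℝ F] [CompleteSpace F]
    (nv : VectorNorm W F)
    -- `F` is order continuous: decreasing (directed downwards) families with
    -- infimum `0` converge to `0` in norm
    (hF : ∀ s : Set F, s.Nonempty → DirectedOn (· ≥ ·) s → IsGLB s 0 →
      ∀ ε : ℝ, 0 < ε → ∃ f ∈ s, ‖f‖ < ε)
    -- `W` is a Banach space with the mixed norm
    (hWcomplete : ∀ w : ℕ → W,
      (∀ ε : ℝ, 0 < ε → ∃ k : ℕ, ∀ m, k ≤ m → ∀ n, k ≤ n → ‖nv.N (w m - w n)‖ < ε) →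
      ∃ l : W, Filter.Tendsto (fun n => ‖nv.N (w n - l)‖) Filter.atTop (nhds 0))
    (μ : A → W)
    (hadd : ∀ x y : A, x ⊓ y = ⊥ → μ (x ⊔ y) = μ x + μ y) :
    OrderDividing nv μ ↔
      ∀ x : A, ∀ ε : ℝ, 0 < ε →
        ∃ y z : A, y ⊓ z = ⊥ ∧ y ⊔ z = x ∧ ‖nv.N (μ y - μ z)‖ < ε := by
  
  constructor
  · -- order dividing → almost dividing
    intro h x ε hε
    obtain ⟨D, le, hD, y, z, hyz, G, leG, hG, e, hmono, hglb, hconv⟩ := h x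
    have hne : (Set.range e).Nonempty := by
      obtain ⟨g⟩ := hG.1
      exact ⟨e g, g, rfl⟩
    have hdir : DirectedOn (· ≥ ·) (Set.range e) := by
      rintro _ ⟨g1, rfl⟩ _ ⟨g2, rfl⟩
      obtain ⟨g3, h1, h2⟩ := hG.2.2.2 g1 g2
      exact ⟨e g3, ⟨g3, rfl⟩, hmono _ _ h1, hmono _ _ h2⟩
    obtain ⟨f, ⟨g, rfl⟩, hfε⟩ := hF _ hne hdir hglb ε hε
    obtain ⟨a₀, ha₀⟩ := hconv g
    have hle := ha₀ a₀ (hD.2.1 a₀)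
    refine ⟨y a₀, z a₀, (hyz a₀).1, (hyz a₀).2, ?_⟩
    have hneg : nv.N (0 - (μ (y a₀) - μ (z a₀))) = nv.N (μ (y a₀) - μ (z a₀)) := by
      rw [zero_sub, ← neg_one_smul ℝ, nv.smul_eq]
      simp
    rw [hneg] at hle
    have habs : |nv.N (μ (y a₀) - μ (z a₀))| ≤ |e g| := by
      rw [abs_of_nonneg (nv.nonneg _), abs_of_nonneg ((nv.nonneg _).trans hle)]
      exact hle
    exact lt_of_le_of_lt (norm_le_norm_of_abs_le_abs habs) hfε
  · -- almost dividing → order dividing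
    intro h x
    have hch : ∀ n : ℕ, ∃ p : A × A, p.1 ⊓ p.2 = ⊥ ∧ p.1 ⊔ p.2 = x ∧
        ‖nv.N (μ p.1 - μ p.2)‖ ≤ (1/2:ℝ)^n := by
      intro n
      obtain ⟨y, z, h1, h2, h3⟩ := h x ((1/2:ℝ)^n) (by positivity)
      exact ⟨(y, z), h1, h2, h3.le⟩
    choose p hp1 hp2 hp3 using hch
    refine ⟨ℕ, (· ≤ ·), ⟨⟨0⟩, fun a => le_refl a, fun a b c => le_trans,
      fun a b => ⟨max a b, le_max_left a b, le_max_right a b⟩⟩,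
      fun n => (p n).1, fun n => (p n).2, fun n => ⟨hp1 n, hp2 n⟩, ?_⟩
    obtain ⟨e, he1, he2, he3⟩ := bo_aux (fun n => nv.N (μ (p n).1 - μ (p n).2))
      (fun n => nv.nonneg _) hp3
    refine ⟨ℕ, (· ≤ ·), ⟨⟨0⟩, fun a => le_refl a, fun a b c => le_trans,
      fun a b => ⟨max a b, le_max_left a b, le_max_right a b⟩⟩, e, he1, he2, ?_⟩
    intro g
    refine ⟨g, fun a hga => ?_⟩
    have hneg : nv.N (0 - (μ (p a).1 - μ (p a).2)) = nv.N (μ (p a).1 - μ (p a).2) := by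
      rw [zero_sub, ← neg_one_smul ℝ, nv.smul_eq]
      simp
    rw [hneg]
    exact he3 g a hga
end

section
/- Let (Ω, Σ) be a measurable space, X a finite-dimensional normed space, and μ : Σ → X an atomless σ-additive vector measure. Then for every A ∈ Σ there exists B ∈ Σ with B ⊆ A and μ(B) = μ(A)/2. -/
open MeasureTheory Set ENNReal

namespace Lyap

variable {Ω : Type*} [MeasurableSpace Ω]

/-- splitting-atomless for a nonnegative measure -/
def Atomless (m : Measure Ω) : Prop :=
  ∀ C : Set Ω, MeasurableSet C → m C ≠ 0 →
    ∃ D, MeasurableSet D ∧ D ⊆ C ∧ m D ≠ 0 ∧ m (C \ D) ≠ 0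

lemma exists_small_pow (m : Measure Ω) [IsFiniteMeasure m] (hat : Atomless m) (k : ℕ) :
    ∀ C : Set Ω, MeasurableSet C → m C ≠ 0 →
      ∃ D, MeasurableSet D ∧ D ⊆ C ∧ m D ≠ 0 ∧ 2 ^ k * m D ≤ m C := by
  induction k with
  | zero => intro C hC hC0; exact ⟨C, hC, subset_rfl, hC0, by simpa using le_rfl⟩
  | succ k ih =>
    intro C hC hC0
    obtain ⟨D, hD, hDC, hD0, hCD0⟩ := hat C hC hC0
    have hsum : m D + m (C \ D) = m C := by
      have := measure_inter_add_diff (μ := m) C hD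
      rwa [Set.inter_eq_self_of_subset_right hDC] at this
    -- pick the smaller of the two pieces
    rcases le_total (m D) (m (C \ D)) with h | h
    · obtain ⟨E, hE, hED, hE0, hEk⟩ := ih D hD hD0
      refine ⟨E, hE, hED.trans hDC, hE0, ?_⟩
      calc 2 ^ (k+1) * m E = 2 ^ k * m E + 2 ^ k * m E := by ring
        _ ≤ m D + m (C \ D) := add_le_add hEk (hEk.trans h)
        _ = m C := hsum
    · obtain ⟨E, hE, hED, hE0, hEk⟩ := ih (C \ D) (hC.diff hD) hCD0
      refine ⟨E, hE, hED.trans diff_subset, hE0, ?_⟩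
      calc 2 ^ (k+1) * m E = 2 ^ k * m E + 2 ^ k * m E := by ring
        _ ≤ m D + m (C \ D) := add_le_add (hEk.trans h) hEk
        _ = m C := hsum

lemma exists_small (m : Measure Ω) [IsFiniteMeasure m] (hat : Atomless m)
    {C : Set Ω} (hC : MeasurableSet C) (hC0 : m C ≠ 0) {ε : ℝ≥0∞} (hε : ε ≠ 0) :
    ∃ D, MeasurableSet D ∧ D ⊆ C ∧ m D ≠ 0 ∧ m D ≤ ε := by
  rcases eq_or_ne ε ⊤ with rfl | hεtop
  · exact ⟨C, hC, subset_rfl, hC0, le_top⟩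
  have hfin : m C / ε ≠ ∞ := (ENNReal.div_lt_top (measure_ne_top m C) hε).ne
  obtain ⟨n, hn⟩ := ENNReal.exists_nat_gt hfin
  obtain ⟨D, hD, hDC, hD0, hDk⟩ := exists_small_pow m hat n C hC hC0
  refine ⟨D, hD, hDC, hD0, ?_⟩
  have h2n : (n : ℝ≥0∞) ≤ 2 ^ n := by exact_mod_cast (Nat.lt_two_pow_self (n := n)).le
  have hlt : m C ≤ 2 ^ n * ε := by
    have h1 : m C / ε ≤ 2 ^ n := hn.le.trans h2n
    calc m C = (m C / ε) * ε := (ENNReal.div_mul_cancel hε hεtop).symm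
      _ ≤ 2 ^ n * ε := mul_le_mul_left h1 ε
  have h1 : m D ≤ m C / 2 ^ n :=
    (ENNReal.le_div_iff_mul_le (Or.inl (by positivity)) (Or.inl (by simp))).2
      (by rwa [mul_comm])
  refine h1.trans ?_
  rw [ENNReal.div_le_iff_le_mul (Or.inl (by positivity)) (Or.inl (by simp))]
  rwa [mul_comm] at hlt

lemma exists_half (m : Measure Ω) [IsFiniteMeasure m] (hat : Atomless m)
    {A : Set Ω} (hA : MeasurableSet A) :
    ∃ B, MeasurableSet B ∧ B ⊆ A ∧ m B = m A / 2 := by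
  classical
  set τ := m A / 2 with hτdef
  have hτ_top : τ ≠ ∞ := by
    simp only [hτdef]
    exact (ENNReal.div_lt_top (measure_ne_top m A) (by norm_num)).ne
  have hτA : τ ≤ m A := ENNReal.half_le_self
  -- one greedy step
  have hstep : ∀ B : Set Ω, MeasurableSet B → m B ≤ τ →
      ∃ D, MeasurableSet D ∧ D ⊆ A \ B ∧ m B + m D ≤ τ ∧
        ∀ E, MeasurableSet E → E ⊆ A \ B → m B + m E ≤ τ → m E ≤ 2 * m D := by
    intro B hB hBτ
    set R : Set ℝ≥0∞ := {x | ∃ E, MeasurableSet E ∧ E ⊆ A \ B ∧ m B + m E ≤ τ ∧ m E = x}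
      with hRdef
    have hRle : ∀ x ∈ R, x ≤ τ := by
      rintro x ⟨E, -, -, hEτ, rfl⟩
      exact le_trans le_add_self hEτ
    have hsle : sSup R ≤ τ := sSup_le hRle
    rcases eq_or_ne (sSup R) 0 with hs0 | hs0
    · refine ⟨∅, MeasurableSet.empty, empty_subset _, by simpa using hBτ, ?_⟩
      intro E hE hEAB hEτ
      have : m E ≤ sSup R := le_sSup ⟨E, hE, hEAB, hEτ, rfl⟩
      simp [hs0] at this
      simp [this]
    · have hhalf : sSup R / 2 < sSup R :=
        ENNReal.half_lt_self hs0 (hsle.trans_lt hτ_top.lt_top).ne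
      obtain ⟨x, hxR, hx⟩ := lt_sSup_iff.mp hhalf
      obtain ⟨D, hD, hDAB, hDτ, rfl⟩ := hxR
      refine ⟨D, hD, hDAB, hDτ, ?_⟩
      intro E hE hEAB hEτ
      have h1 : m E ≤ sSup R := le_sSup ⟨E, hE, hEAB, hEτ, rfl⟩
      have h2 : sSup R ≤ 2 * m D := by
        calc sSup R = sSup R / 2 + sSup R / 2 := (ENNReal.add_halves _).symm
          _ ≤ m D + m D := add_le_add hx.le hx.le
          _ = 2 * m D := (two_mul _).symm
      exact h1.trans h2
  -- the invariant
  set P : Set Ω → Prop := fun B => MeasurableSet B ∧ B ⊆ A ∧ m B ≤ τ with hPdef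
  set next : Set Ω → Set Ω := fun B =>
    if h : P B then B ∪ (hstep B h.1 h.2.2).choose else B with hnext
  set F : ℕ → Set Ω := fun k => next^[k] ∅ with hFdef
  have hF0 : F 0 = ∅ := rfl
  have hPnext : ∀ B (hB : P B), P (next B) ∧ next B = B ∪ (hstep B hB.1 hB.2.2).choose := by
    intro B hB
    obtain ⟨hD, hDAB, hDτ, -⟩ := (hstep B hB.1 hB.2.2).choose_spec
    have heq : next B = B ∪ (hstep B hB.1 hB.2.2).choose := dif_pos hB
    refine ⟨?_, heq⟩
    rw [heq]
    exact ⟨hB.1.union hD, union_subset hB.2.1 (hDAB.trans diff_subset),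
      (measure_union_le _ _).trans hDτ⟩
  have hPF : ∀ k, P (F k) := by
    intro k
    induction k with
    | zero => exact ⟨MeasurableSet.empty, empty_subset _, by rw [hF0]; simp⟩
    | succ k ih =>
      have : F (k+1) = next (F k) := Function.iterate_succ_apply' next k ∅
      rw [this]
      exact (hPnext _ ih).1
  set D : ℕ → Set Ω := fun k => (hstep (F k) (hPF k).1 (hPF k).2.2).choose with hDdef
  have hDspec : ∀ k, MeasurableSet (D k) ∧ D k ⊆ A \ F k ∧ m (F k) + m (D k) ≤ τ ∧
      ∀ E, MeasurableSet E → E ⊆ A \ F k → m (F k) + m E ≤ τ → m E ≤ 2 * m (D k) :=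
    fun k => (hstep (F k) (hPF k).1 (hPF k).2.2).choose_spec
  have hFsucc : ∀ k, F (k+1) = F k ∪ D k := by
    intro k
    have : F (k+1) = next (F k) := Function.iterate_succ_apply' next k ∅
    rw [this, (hPnext _ (hPF k)).2]
  have hFadd : ∀ k, m (F (k+1)) = m (F k) + m (D k) := by
    intro k
    rw [hFsucc k]
    exact measure_union (disjoint_sdiff_right.mono_right (hDspec k).2.1) (hDspec k).1
  have hFmono : Monotone F := by
    apply monotone_nat_of_le_succ
    intro k
    rw [hFsucc k]
    exact subset_union_left
  set B : Set Ω := ⋃ k, F k with hBdef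
  have hBmeas : MeasurableSet B := MeasurableSet.iUnion fun k => (hPF k).1
  have hBA : B ⊆ A := iUnion_subset fun k => (hPF k).2.1
  have hBsup : m B = ⨆ k, m (F k) := Directed.measure_iUnion (hFmono.directed_le)
  have hBτ : m B ≤ τ := by rw [hBsup]; exact iSup_le fun k => (hPF k).2.2
  refine ⟨B, hBmeas, hBA, ?_⟩
  by_contra hne
  have hlt : m B < τ := lt_of_le_of_ne hBτ hne
  -- A \ B has positive measure
  have hABpos : m (A \ B) ≠ 0 := by
    intro h0
    have h1 : m (A ∩ B) + m (A \ B) = m A := measure_inter_add_diff A hBmeas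
    rw [Set.inter_eq_self_of_subset_right hBA, h0, add_zero] at h1
    exact absurd (h1 ▸ hlt.trans_le hτA) (lt_irrefl _)
  have hδ : τ - m B ≠ 0 := by
    rw [← pos_iff_ne_zero]
    exact tsub_pos_of_lt hlt
  obtain ⟨D₀, hD₀, hD₀AB, hD₀0, hD₀δ⟩ := exists_small m hat (hA.diff hBmeas) hABpos hδ
  set c : ℝ≥0∞ := m D₀ / 2 with hcdef
  have hc0 : c ≠ 0 := by
    simp only [hcdef]
    simp [ENNReal.div_eq_zero_iff, hD₀0]
  have hcD : ∀ k, c ≤ m (D k) := by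
    intro k
    have hsub : D₀ ⊆ A \ F k :=
      hD₀AB.trans (diff_subset_diff_right (subset_iUnion F k))
    have hadm : m (F k) + m D₀ ≤ τ := by
      calc m (F k) + m D₀ ≤ m B + (τ - m B) :=
            add_le_add (measure_mono (subset_iUnion F k)) hD₀δ
        _ = τ := add_tsub_cancel_of_le hlt.le
    have h2 : m D₀ ≤ 2 * m (D k) := (hDspec k).2.2.2 D₀ hD₀ hsub hadm
    rw [hcdef, ENNReal.div_le_iff_le_mul (Or.inl two_ne_zero) (Or.inl ENNReal.ofNat_ne_top)]
    rwa [mul_comm] at h2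
  have hgrow : ∀ k : ℕ, (k : ℝ≥0∞) * c ≤ m (F k) := by
    intro k
    induction k with
    | zero => simp
    | succ k ih =>
      rw [hFadd k]
      push_cast
      rw [add_mul, one_mul]
      exact add_le_add ih (hcD k)
  have hctop : τ / c ≠ ∞ := (ENNReal.div_lt_top hτ_top hc0).ne
  obtain ⟨k, hk⟩ := ENNReal.exists_nat_gt hctop
  have h1 : τ < (k : ℝ≥0∞) * c := by
    rcases eq_or_ne c ∞ with hctop' | hctop'
    · calc τ < ∞ := hτ_top.lt_top
        _ ≤ (k : ℝ≥0∞) * c := by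
          rw [hctop']
          rcases Nat.eq_zero_or_pos k with rfl | hkpos
          · simp at hk
          · simp [ENNReal.mul_top, Nat.cast_ne_zero.mpr hkpos.ne']
    · rw [← ENNReal.div_lt_iff (Or.inl hc0) (Or.inl hctop')]
      exact hk
  exact absurd ((hgrow k).trans (hPF k).2.2) (not_le.mpr h1)

lemma exists_family {N : ℕ} (μs : Fin N → Measure Ω) [hfin : ∀ i, IsFiniteMeasure (μs i)]
    (O : ∀ C, MeasurableSet C → ∃ D, MeasurableSet D ∧ D ⊆ C ∧ ∀ i, μs i D = μs i C / 2)
    {A : Set Ω} (hA : MeasurableSet A) :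
    ∃ T : ℝ → Set Ω,
      (∀ t, MeasurableSet (T t)) ∧ (∀ t, T t ⊆ A) ∧
      (∀ s t : ℝ, s ≤ t → T s ⊆ T t) ∧ T 1 = A ∧
      (∀ t ∈ Set.Icc (0:ℝ) 1, ∀ i, (μs i (T t)).toReal = t * (μs i A).toReal) := by
  classical
  -- the halving function
  set half : Set Ω → Set Ω := fun C => if h : MeasurableSet C then (O C h).choose else ∅
    with hhalfdef
  have hhalf : ∀ C, MeasurableSet C →
      MeasurableSet (half C) ∧ half C ⊆ C ∧ ∀ i, μs i (half C) = μs i C / 2 := by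
    intro C hC
    have : half C = (O C hC).choose := dif_pos hC
    rw [this]
    exact (O C hC).choose_spec
  -- dyadic pieces
  set pieces : ℕ → ℕ → Set Ω := fun k => Nat.rec (fun j => if j = 0 then A else ∅)
    (fun _ Pk j => if j % 2 = 0 then half (Pk (j / 2)) else Pk (j / 2) \ half (Pk (j / 2))) k
    with hpiecesdef
  have hp0 : ∀ j, pieces 0 j = if j = 0 then A else ∅ := fun _ => rfl
  have hpS : ∀ k j, pieces (k+1) j =
      if j % 2 = 0 then half (pieces k (j/2)) else pieces k (j/2) \ half (pieces k (j/2)) :=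
    fun _ _ => rfl
  clear_value pieces
  clear hpiecesdef
  have hmeas : ∀ k j, MeasurableSet (pieces k j) := by
    intro k
    induction k with
    | zero => intro j; rw [hp0]; split <;> simp [hA]
    | succ k ih =>
      intro j
      rw [hpS]
      split
      · exact (hhalf _ (ih (j/2))).1
      · exact (ih (j/2)).diff (hhalf _ (ih (j/2))).1
  have hsubk : ∀ k j, pieces (k+1) j ⊆ pieces k (j/2) := by
    intro k j
    rw [hpS]
    split
    · exact (hhalf _ (hmeas k (j/2))).2.1
    · exact diff_subset
  have hsubA : ∀ k j, pieces k j ⊆ A := by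
    intro k
    induction k with
    | zero => intro j; rw [hp0]; split <;> simp
    | succ k ih => intro j; exact (hsubk k j).trans (ih (j/2))
  have hdisj : ∀ k j j', j < j' → Disjoint (pieces k j) (pieces k j') := by
    intro k
    induction k with
    | zero =>
      intro j j' hjj'
      have h0 : pieces 0 j' = ∅ := by rw [hp0, if_neg (Nat.zero_lt_of_lt hjj').ne']
      simp [h0]
    | succ k ih =>
      intro j j' hjj'
      rcases lt_or_eq_of_le (Nat.div_le_div_right (le_of_lt hjj') (c := 2)) with h | h
      · exact Set.disjoint_of_subset (hsubk k j) (hsubk k j') (ih _ _ h)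
      · have hj2 : j % 2 = 0 ∧ j' % 2 = 1 := by omega
        rw [hpS, hpS, h, if_pos hj2.1, if_neg (by omega)]
        exact disjoint_sdiff_right
  have hμp : ∀ k j, j < 2^k → ∀ i, μs i (pieces k j) = μs i A / 2^k := by
    intro k
    induction k with
    | zero =>
      intro j hj i
      have hj0 : j = 0 := by omega
      subst hj0
      rw [hp0]
      simp
    | succ k ih =>
      intro j hj i
      have hq : j / 2 < 2^k := by omega
      have hC := hmeas k (j/2)
      have hCeq := ih (j/2) hq i
      have htop : μs i (pieces k (j/2)) ≠ ∞ := measure_ne_top _ _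
      have hdd : μs i A / 2^k / 2 = μs i A / 2^(k+1) := by
        rw [div_eq_mul_inv, div_eq_mul_inv, div_eq_mul_inv, mul_assoc,
          ← ENNReal.mul_inv (Or.inl (pow_ne_zero k two_ne_zero))
            (Or.inl (ENNReal.pow_ne_top ENNReal.ofNat_ne_top)), ← pow_succ]
      rw [hpS]
      split
      · rw [(hhalf _ hC).2.2 i, hCeq, hdd]
      · rw [measure_diff (hhalf _ hC).2.1 (hhalf _ hC).1.nullMeasurableSet
          (ne_top_of_le_ne_top htop (measure_mono (hhalf _ hC).2.1)),
          (hhalf _ hC).2.2 i, hCeq, ENNReal.sub_half ?_, hdd]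
        rw [hCeq] at htop
        exact htop
  clear_value half
  -- partial unions
  set S : ℕ → ℕ → Set Ω := fun k r => ⋃ j ∈ Finset.range r, pieces k j with hSdef
  have hSmeas : ∀ k r, MeasurableSet (S k r) := fun k r =>
    (Finset.range r).measurableSet_biUnion (fun j _ => hmeas k j)
  have hSsubA : ∀ k r, S k r ⊆ A := fun k r =>
    Set.iUnion₂_subset fun j _ => hsubA k j
  have hSsucc : ∀ k r, S k (r+1) = S k r ∪ pieces k r := by
    intro k r
    simp only [hSdef, Finset.range_add_one, Finset.set_biUnion_insert]
    rw [Set.union_comm]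
  have hS0 : ∀ k, S k 0 = ∅ := by
    intro k
    simp [hSdef]
  have hSmono : ∀ k r r', r ≤ r' → S k r ⊆ S k r' := by
    intro k r r' h
    refine Set.iUnion₂_subset fun j hj => Set.subset_iUnion₂ (s := fun j _ => pieces k j) j ?_
    exact Finset.mem_range.mpr (lt_of_lt_of_le (Finset.mem_range.mp hj) h)
  have hSμ : ∀ i k r, r ≤ 2^k → μs i (S k r) = r * (μs i A / 2^k) := by
    intro i k r hr
    rw [hSdef]
    rw [measure_biUnion_finset ?_ (fun j _ => hmeas k j)]
    · rw [Finset.sum_congr rfl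
        (fun j hj => hμp k j (lt_of_lt_of_le (Finset.mem_range.mp hj) hr) i)]
      simp [Finset.sum_const, nsmul_eq_mul]
    · intro a ha b hb hab
      rcases lt_or_gt_of_ne hab with h | h
      · exact hdisj k a b h
      · exact (hdisj k b a h).symm
  clear_value S
  clear hSdef
  have hScomp : ∀ k r, S (k+1) (2*r) = S k r := by
    intro k r
    induction r with
    | zero =>
      have : 2 * 0 = 0 := rfl
      rw [this, hS0, hS0]
    | succ r ih =>
      have h2 : 2 * (r + 1) = (2*r + 1) + 1 := by ring
      rw [h2, hSsucc, hSsucc, hSsucc, ih, Set.union_assoc]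
      congr 1
      have hcan : half (pieces k r) ∪ (pieces k r \ half (pieces k r)) = pieces k r :=
        Set.union_diff_cancel (hhalf _ (hmeas k r)).2.1
      rw [hpS, hpS]
      have e1 : 2 * r % 2 = 0 := by omega
      have e3 : 2 * r / 2 = r := by omega
      have e4 : (2 * r + 1) / 2 = r := by omega
      rw [if_pos e1, if_neg (by omega), e3, e4, hcan]
  have hSfull : ∀ k, S k (2^k) = A := by
    intro k
    induction k with
    | zero =>
      have : (2:ℕ)^0 = 0 + 1 := rfl
      rw [this, hSsucc, hS0, hp0]
      simp
    | succ k ih => rw [pow_succ, mul_comm, hScomp, ih]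
  -- the family
  set T : ℝ → Set Ω := fun t => ⋃ k, S k ⌊t * 2^k⌋₊ with hTdef
  have hTmeas : ∀ t, MeasurableSet (T t) := fun t => MeasurableSet.iUnion fun k => hSmeas _ _
  have hTsubA : ∀ t, T t ⊆ A := fun t => Set.iUnion_subset fun k => hSsubA _ _
  have hTmono : ∀ s t : ℝ, s ≤ t → T s ⊆ T t := by
    intro s t hst
    refine Set.iUnion_mono fun k => hSmono _ _ _ (Nat.floor_mono ?_)
    exact mul_le_mul_of_nonneg_right hst (by positivity)
  have hT1 : T 1 = A := by
    have heq : ∀ k, S k ⌊(1:ℝ) * 2^k⌋₊ = A := by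
      intro k
      have hcast : ((1:ℝ) * 2^k) = ((2^k : ℕ) : ℝ) := by push_cast; ring
      rw [hcast, Nat.floor_natCast, hSfull]
    simp only [hTdef, heq, Set.iUnion_const]
  refine ⟨T, hTmeas, hTsubA, hTmono, hT1, ?_⟩
  rintro t ⟨ht0, ht1⟩ i
  haveI := hfin i
  have h2kpos : ∀ k : ℕ, (0:ℝ) < 2^k := fun k => by positivity
  have hchain : Monotone (fun k => S k ⌊t * 2^k⌋₊) := by
    apply monotone_nat_of_le_succ
    intro k
    have h1 : 2 * ⌊t * 2^k⌋₊ ≤ ⌊t * 2^(k+1)⌋₊ := by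
      apply Nat.le_floor
      push_cast
      have hfl : (⌊t * 2^k⌋₊ : ℝ) ≤ t * 2^k := Nat.floor_le (by positivity)
      have hps : (2:ℝ)^(k+1) = 2^k * 2 := pow_succ 2 k
      rw [hps]
      nlinarith [hfl]
    calc S k ⌊t * 2^k⌋₊ = S (k+1) (2 * ⌊t * 2^k⌋₊) := (hScomp k _).symm
      _ ⊆ S (k+1) ⌊t * 2^(k+1)⌋₊ := hSmono _ _ _ h1
  have hfloorle : ∀ k, ⌊t * 2^k⌋₊ ≤ 2^k := by
    intro k
    have hle : t * 2^k ≤ ((2^k : ℕ) : ℝ) := by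
      push_cast
      nlinarith [h2kpos k]
    calc ⌊t * 2^k⌋₊ ≤ ⌊((2^k : ℕ) : ℝ)⌋₊ := Nat.floor_mono hle
      _ = 2^k := Nat.floor_natCast _
  have htend : Filter.Tendsto (fun k => μs i (S k ⌊t * 2^k⌋₊)) Filter.atTop
      (nhds (μs i (T t))) := by
    rw [hTdef]
    exact tendsto_measure_iUnion_atTop hchain
  have htoReal : Filter.Tendsto (fun k => (μs i (S k ⌊t * 2^k⌋₊)).toReal) Filter.atTop
      (nhds ((μs i (T t)).toReal)) :=
    (ENNReal.tendsto_toReal (measure_ne_top _ _)).comp htend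
  have hterm : ∀ k, (μs i (S k ⌊t * 2^k⌋₊)).toReal
      = (⌊t * 2^k⌋₊ : ℝ) / 2^k * (μs i A).toReal := by
    intro k
    rw [hSμ i k _ (hfloorle k)]
    rw [ENNReal.toReal_mul, ENNReal.toReal_div, ENNReal.toReal_natCast]
    have : ((2:ℝ≥0∞)^k).toReal = (2:ℝ)^k := by
      rw [ENNReal.toReal_pow]
      norm_num
    rw [this]
    ring
  have hreal : Filter.Tendsto (fun k : ℕ => (⌊t * 2^k⌋₊ : ℝ) / 2^k * (μs i A).toReal)
      Filter.atTop (nhds (t * (μs i A).toReal)) := by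
    have hfl : Filter.Tendsto (fun k : ℕ => (⌊t * 2^k⌋₊ : ℝ) / 2^k) Filter.atTop (nhds t) := by
      have hup : ∀ k : ℕ, (⌊t * 2^k⌋₊ : ℝ) / 2^k ≤ t := by
        intro k
        rw [div_le_iff₀ (h2kpos k)]
        exact Nat.floor_le (by positivity)
      have hlo : ∀ k : ℕ, t - (1/2)^k ≤ (⌊t * 2^k⌋₊ : ℝ) / 2^k := by
        intro k
        rw [le_div_iff₀ (h2kpos k)]
        have hfl := Nat.sub_one_lt_floor (t * 2^k)
        have h2 : (1/2:ℝ)^k * 2^k = 1 := by rw [← mul_pow]; norm_num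
        nlinarith [hfl, h2]
      have h1 : Filter.Tendsto (fun k : ℕ => t - (1/2:ℝ)^k) Filter.atTop (nhds (t - 0)) :=
        Filter.Tendsto.const_sub t
          (tendsto_pow_atTop_nhds_zero_of_lt_one (by norm_num) (by norm_num))
      rw [sub_zero] at h1
      exact tendsto_of_tendsto_of_tendsto_of_le_of_le h1 tendsto_const_nhds hlo hup
    simpa using hfl.mul_const ((μs i A).toReal)
  exact tendsto_nhds_unique (Filter.Tendsto.congr hterm htoReal) hreal

lemma exists_simul_half (n : ℕ) :
    ∀ (m : Measure Ω), IsFiniteMeasure m → Atomless m →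
      ∀ (lam : Fin n → Measure Ω), (∀ i, lam i ≤ m) →
      ∀ (A : Set Ω), MeasurableSet A →
      ∃ B, MeasurableSet B ∧ B ⊆ A ∧ m B = m A / 2 ∧ ∀ i, lam i B = lam i A / 2 := by
  induction n with
  | zero =>
    intro m hm hat lam hle A hA
    haveI := hm
    obtain ⟨B, hB, hBA, hBm⟩ := exists_half m hat hA
    exact ⟨B, hB, hBA, hBm, fun i => i.elim0⟩
  | succ n ih =>
    intro m hm hat lam hle A hA
    haveI := hm
    haveI : ∀ i, IsFiniteMeasure (lam i) := fun i => isFiniteMeasure_of_le m (hle i)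
    set ν : Measure Ω := lam (Fin.last n) with hνdef
    set μs : Fin (n+1) → Measure Ω := Fin.cons m (fun i : Fin n => lam i.castSucc) with hμsdef
    haveI hμsfin : ∀ j, IsFiniteMeasure (μs j) := by
      intro j
      refine Fin.cases ?_ ?_ j
      · simpa [hμsdef] using hm
      · intro i
        simpa [hμsdef] using (this i.castSucc)
    have hO : ∀ C, MeasurableSet C → ∃ D, MeasurableSet D ∧ D ⊆ C ∧
        ∀ j, μs j D = μs j C / 2 := by
      intro C hC
      obtain ⟨D, hD, hDC, hDm, hDlam⟩ :=
        ih m hm hat (fun i => lam i.castSucc) (fun i => hle _) C hC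
      refine ⟨D, hD, hDC, ?_⟩
      intro j
      refine Fin.cases ?_ ?_ j
      · simpa [hμsdef] using hDm
      · intro i
        simpa [hμsdef] using hDlam i
    obtain ⟨T, hTmeas, hTsubA, hTmono, hT1, hTμ⟩ := exists_family μs hO hA
    -- notation
    have hm0 : ∀ t ∈ Set.Icc (0:ℝ) 1, (m (T t)).toReal = t * (m A).toReal := by
      intro t ht
      have := hTμ t ht 0
      simpa [hμsdef] using this
    have hT0 : ∀ κ : Measure Ω, κ ≤ m → κ (T 0) = 0 := by
      intro κ hκ
      have h1 : (m (T 0)).toReal = 0 := by simpa using hm0 0 (by norm_num)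
      have h2 : m (T 0) = 0 := by
        rw [ENNReal.toReal_eq_zero_iff] at h1
        exact h1.resolve_right (measure_ne_top m _)
      exact le_antisymm ((Measure.le_iff'.mp hκ (T 0)).trans h2.le) (zero_le)
    -- difference formula
    have hdiff : ∀ (κ : Measure Ω), IsFiniteMeasure κ → ∀ s t : ℝ, s ≤ t →
        (κ (T t \ T s)).toReal = (κ (T t)).toReal - (κ (T s)).toReal := by
      intro κ hκ s t hst
      haveI := hκ
      rw [measure_diff (hTmono s t hst) (hTmeas s).nullMeasurableSet (measure_ne_top κ _),
        ENNReal.toReal_sub_of_le (measure_mono (hTmono s t hst)) (measure_ne_top κ _)]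
    set G : ℝ → ℝ := fun u => (ν (T u)).toReal with hGdef
    have hνle : ν ≤ m := hle _
    have hGmono : ∀ s t : ℝ, s ≤ t → G s ≤ G t := by
      intro s t hst
      exact ENNReal.toReal_mono (measure_ne_top ν _) (measure_mono (hTmono s t hst))
    have hGlip : ∀ s t : ℝ, 0 ≤ s → s ≤ t → t ≤ 1 → G t - G s ≤ (t - s) * (m A).toReal := by
      intro s t hs hst ht1
      have h1 : (ν (T t \ T s)).toReal = G t - G s := hdiff ν (by infer_instance) s t hst
      have h2 : (ν (T t \ T s)).toReal ≤ (m (T t \ T s)).toReal :=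
        ENNReal.toReal_mono (measure_ne_top m _) (Measure.le_iff'.mp hνle _)
      have h3 : (m (T t \ T s)).toReal = t * (m A).toReal - s * (m A).toReal := by
        rw [hdiff m (by infer_instance) s t hst, hm0 t ⟨hs.trans hst, ht1⟩,
          hm0 s ⟨hs, hst.trans ht1⟩]
      rw [← h1]
      rw [h3] at h2
      linarith [h2]
    have hGcont : ContinuousOn G (Set.Icc 0 1) := by
      have hlip : LipschitzOnWith ((m A).toReal.toNNReal) G (Set.Icc 0 1) := by
        rw [lipschitzOnWith_iff_dist_le_mul]
        intro x hx y hy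
        rw [Real.dist_eq, Real.dist_eq, Real.coe_toNNReal _ ENNReal.toReal_nonneg]
        rcases le_total x y with h | h
        · rw [abs_of_nonpos (by linarith [hGmono x y h]), abs_of_nonpos (by linarith)]
          have := hGlip x y hx.1 h hy.2
          nlinarith [this]
        · rw [abs_of_nonneg (by linarith [hGmono y x h]), abs_of_nonneg (by linarith)]
          have := hGlip y x hy.1 h hx.2
          nlinarith [this]
      exact hlip.continuousOn
    set g : ℝ → ℝ := fun u => G (u + 2⁻¹) - G u with hgdef
    have hgcont : ContinuousOn g (Set.Icc 0 2⁻¹) := by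
      have c1 : ContinuousOn (fun u : ℝ => G (u + 2⁻¹)) (Set.Icc 0 2⁻¹) := by
        apply hGcont.comp (Continuous.continuousOn (continuous_id.add continuous_const))
        intro x hx
        simp only [Pi.add_apply, id_eq]
        exact ⟨by linarith [hx.1], by linarith [hx.2]⟩
      have c2 : ContinuousOn G (Set.Icc 0 2⁻¹) :=
        hGcont.mono (fun x hx => ⟨hx.1, by linarith [hx.2]⟩)
      exact c1.sub c2
    have hG0 : G 0 = 0 := by
      rw [hGdef]
      simp [hT0 ν hνle]
    have hG1 : G 1 = (ν A).toReal := by rw [hGdef]; simp only []; rw [hT1]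
    have hsum : g 0 + g 2⁻¹ = (ν A).toReal := by
      have e1 : (2⁻¹ : ℝ) + 2⁻¹ = 1 := by norm_num
      have e0 : (0:ℝ) + 2⁻¹ = 2⁻¹ := by norm_num
      simp only [hgdef]
      rw [e1, e0, hG0, hG1]
      ring
    have hmem : (ν A).toReal / 2 ∈ Set.uIcc (g 0) (g 2⁻¹) := by
      rcases le_total (g 0) (g 2⁻¹) with h | h
      · rw [Set.uIcc_of_le h]; exact ⟨by linarith, by linarith⟩
      · rw [Set.uIcc_of_ge h]; exact ⟨by linarith, by linarith⟩
    have hIcc : Set.uIcc (0:ℝ) 2⁻¹ = Set.Icc 0 2⁻¹ := Set.uIcc_of_le (by norm_num)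
    obtain ⟨u, hu, hgu⟩ :=
      intermediate_value_uIcc (a := (0:ℝ)) (b := 2⁻¹) (f := g) (by rw [hIcc]; exact hgcont) hmem
    rw [hIcc] at hu
    have hu1 : u + 2⁻¹ ∈ Set.Icc (0:ℝ) 1 := ⟨by linarith [hu.1], by linarith [hu.2]⟩
    have hu0 : u ∈ Set.Icc (0:ℝ) 1 := ⟨hu.1, by linarith [hu.2]⟩
    have hule : u ≤ u + 2⁻¹ := by linarith
    -- conversion back to ENNReal
    have key : ∀ κ : Measure Ω, IsFiniteMeasure κ →
        ((κ (T (u+2⁻¹) \ T u)).toReal = (κ A).toReal / 2) →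
        κ (T (u+2⁻¹) \ T u) = κ A / 2 := by
      intro κ hκ h
      haveI := hκ
      have h2 : (κ A / 2).toReal = (κ A).toReal / 2 := by
        rw [ENNReal.toReal_div]
        norm_num
      refine (ENNReal.toReal_eq_toReal_iff' (measure_ne_top κ _) ?_).mp (by rw [h, h2])
      exact (ENNReal.div_lt_top (measure_ne_top κ _) (by norm_num)).ne
    refine ⟨T (u + 2⁻¹) \ T u, (hTmeas _).diff (hTmeas _),
      Set.diff_subset.trans (hTsubA _), ?_, ?_⟩
    · refine key m (by infer_instance) ?_
      rw [hdiff m (by infer_instance) u (u+2⁻¹) hule, hm0 _ hu1, hm0 _ hu0]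
      ring
    · intro i
      refine Fin.lastCases ?_ ?_ i
      · refine key ν (by infer_instance) ?_
        rw [hdiff ν (by infer_instance) u (u+2⁻¹) hule]
        exact hgu
      · intro i'
        have hlamval : ∀ t ∈ Set.Icc (0:ℝ) 1,
            (lam i'.castSucc (T t)).toReal = t * (lam i'.castSucc A).toReal := by
          intro t ht
          have := hTμ t ht i'.succ
          simpa [hμsdef] using this
        refine key (lam i'.castSucc) (by infer_instance) ?_
        rw [hdiff (lam i'.castSucc) (by infer_instance) u (u+2⁻¹) hule,
          hlamval _ hu1, hlamval _ hu0]
        ring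

end Lyap

open Lyap in
/-- an atomless σ-additive vector measure with values in a
finite-dimensional normed space attains half of `μ A` on a measurable subset of `A`
(a consequence of the Lyapunov convexity theorem). -/
theorem exists_half_measure {Ω : Type*} [MeasurableSpace Ω] {X : Type*}
    [NormedAddCommGroup X] [NormedSpace ℝ X] [FiniteDimensional ℝ X]
    (μ : VectorMeasure Ω X)
    (hatomless : ∀ A : Set Ω, MeasurableSet A → μ A ≠ 0 →
      ∃ B : Set Ω, MeasurableSet B ∧ B ⊆ A ∧ μ B ≠ 0 ∧ μ (A \ B) ≠ 0)
    (A : Set Ω) (hA : MeasurableSet A) :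
    ∃ B : Set Ω, MeasurableSet B ∧ B ⊆ A ∧ μ B = (2 : ℝ)⁻¹ • μ A := by
  classical
  set d := Module.finrank ℝ X with hd
  set b : Module.Basis (Fin d) ℝ X := Module.finBasis ℝ X with hb
  have hcont : ∀ i, Continuous (b.coord i) := fun i =>
    LinearMap.continuous_of_finiteDimensional _
  set σ : Fin d → SignedMeasure Ω := fun i =>
    μ.mapRange (b.coord i).toAddMonoidHom (hcont i) with hσdef
  have hσ : ∀ i (E : Set Ω), σ i E = b.coord i (μ E) := fun i E =>
    VectorMeasure.mapRange_apply μ (hcont i)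
  set p : Fin d → Measure Ω := fun i => (σ i).toJordanDecomposition.posPart with hpdef
  set q : Fin d → Measure Ω := fun i => (σ i).toJordanDecomposition.negPart with hqdef
  haveI hpfin : ∀ i, IsFiniteMeasure (p i) := fun i => by
    rw [hpdef]; infer_instance
  haveI hqfin : ∀ i, IsFiniteMeasure (q i) := fun i => by
    rw [hqdef]; infer_instance
  have hval : ∀ i (E : Set Ω), MeasurableSet E →
      σ i E = (p i E).toReal - (q i E).toReal := by
    intro i E hE
    conv_lhs => rw [← (σ i).toSignedMeasure_toJordanDecomposition]
    have : (σ i).toJordanDecomposition.toSignedMeasure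
        = (σ i).toJordanDecomposition.posPart.toSignedMeasure
          - (σ i).toJordanDecomposition.negPart.toSignedMeasure := rfl
    rw [this, Measure.toSignedMeasure_sub_apply hE]
    rfl
  set m : Measure Ω := ∑ i : Fin d, (p i + q i) with hmdef
  have hmapp : ∀ E : Set Ω, m E = ∑ i : Fin d, (p i E + q i E) := by
    intro E
    rw [hmdef, Measure.finset_sum_apply]
    exact Finset.sum_congr rfl fun i _ => rfl
  haveI hmfin : IsFiniteMeasure m := by
    constructor
    rw [hmapp]
    exact ENNReal.sum_lt_top.mpr fun i _ =>
      ENNReal.add_lt_top.mpr ⟨measure_lt_top _ _, measure_lt_top _ _⟩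
  have hple : ∀ i, p i ≤ m := by
    intro i
    refine Measure.le_iff'.mpr fun E => ?_
    rw [hmapp]
    calc p i E ≤ p i E + q i E := le_self_add
      _ ≤ ∑ j, (p j E + q j E) := Finset.single_le_sum
          (f := fun j => p j E + q j E) (fun j _ => zero_le) (Finset.mem_univ i)
  have hqle : ∀ i, q i ≤ m := by
    intro i
    refine Measure.le_iff'.mpr fun E => ?_
    rw [hmapp]
    calc q i E ≤ p i E + q i E := le_add_self
      _ ≤ ∑ j, (p j E + q j E) := Finset.single_le_sum
          (f := fun j => p j E + q j E) (fun j _ => zero_le) (Finset.mem_univ i)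
  -- m-null sets are μ-null
  have hzero : ∀ E : Set Ω, MeasurableSet E → m E = 0 → μ E = 0 := by
    intro E hE h0
    rw [hmapp] at h0
    rw [Finset.sum_eq_zero_iff] at h0
    have hσ0 : ∀ i, σ i E = 0 := by
      intro i
      have := h0 i (Finset.mem_univ i)
      rw [add_eq_zero] at this
      rw [hval i E hE, this.1, this.2]
      simp
    apply b.ext_elem
    intro i
    have := hσ0 i
    rw [hσ i E] at this
    rw [Module.Basis.coord_apply] at this
    simp [this]
  -- atomlessness of m
  have hatm : Atomless m := by
    intro C hC hC0
    have hex : ∃ i, p i C ≠ 0 ∨ q i C ≠ 0 := by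
      by_contra hcon
      push_neg at hcon
      apply hC0
      rw [hmapp]
      apply Finset.sum_eq_zero
      intro i _
      rw [(hcon i).1, (hcon i).2, add_zero]
    obtain ⟨i, hi⟩ := hex
    obtain ⟨S, hSmeas, hpS, hqSc⟩ := (σ i).toJordanDecomposition.mutuallySingular
    -- find D ⊆ C measurable with σ i D ≠ 0
    have hD : ∃ D, MeasurableSet D ∧ D ⊆ C ∧ σ i D ≠ 0 := by
      rcases hi with hp | hq
      · refine ⟨C ∩ Sᶜ, hC.inter hSmeas.compl, Set.inter_subset_left, ?_⟩
        have h1 : p i (C ∩ S) = 0 :=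
          le_antisymm (le_trans (measure_mono Set.inter_subset_right) hpS.le) (zero_le)
        have h2 : p i (C ∩ S) + p i (C \ S) = p i C := measure_inter_add_diff C hSmeas
        rw [h1, zero_add] at h2
        have h3 : p i (C ∩ Sᶜ) ≠ 0 := by rw [← Set.diff_eq, h2]; exact hp
        have h4 : q i (C ∩ Sᶜ) = 0 :=
          le_antisymm (le_trans (measure_mono Set.inter_subset_right) hqSc.le) (zero_le)
        rw [hval i _ (hC.inter hSmeas.compl), h4]
        simp only [ENNReal.toReal_zero, sub_zero]
        exact fun hcon => h3 (by
          rw [ENNReal.toReal_eq_zero_iff] at hcon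
          exact hcon.resolve_right (measure_ne_top _ _))
      · refine ⟨C ∩ S, hC.inter hSmeas, Set.inter_subset_left, ?_⟩
        have h1 : q i (C ∩ Sᶜ) = 0 :=
          le_antisymm (le_trans (measure_mono Set.inter_subset_right) hqSc.le) (zero_le)
        have h2 : q i (C ∩ S) + q i (C \ S) = q i C := measure_inter_add_diff C hSmeas
        have h1' : q i (C \ S) = 0 := by rw [Set.diff_eq]; exact h1
        have h3 : q i (C ∩ S) ≠ 0 := by
          rw [h1', add_zero] at h2
          rw [h2]; exact hq
        have h4 : p i (C ∩ S) = 0 :=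
          le_antisymm (le_trans (measure_mono Set.inter_subset_right) hpS.le) (zero_le)
        rw [hval i _ (hC.inter hSmeas), h4]
        simp only [ENNReal.toReal_zero, zero_sub, ne_eq, neg_eq_zero]
        exact fun hcon => h3 (by
          rw [ENNReal.toReal_eq_zero_iff] at hcon
          exact hcon.resolve_right (measure_ne_top _ _))
    obtain ⟨D, hDmeas, hDC, hσD⟩ := hD
    have hμD : μ D ≠ 0 := by
      intro hcon
      apply hσD
      rw [hσ i D, hcon, map_zero]
    obtain ⟨E, hEmeas, hED, hμE, hμDE⟩ := hatomless D hDmeas hμD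
    refine ⟨E, hEmeas, hED.trans hDC, ?_, ?_⟩
    · intro hcon
      exact hμE (hzero E hEmeas hcon)
    · intro hcon
      apply hμDE
      apply hzero _ (hDmeas.diff hEmeas)
      refine le_antisymm (le_trans (measure_mono ?_) hcon.le) (zero_le)
      exact Set.diff_subset_diff_left hDC
  -- simultaneous halving of all p i and q i
  obtain ⟨B, hBmeas, hBA, hBm, hBall⟩ :=
    exists_simul_half (d + d) m hmfin hatm (Fin.append p q)
      (fun j => Fin.addCases (fun i => by rw [Fin.append_left]; exact hple i)
        (fun i => by rw [Fin.append_right]; exact hqle i) j) A hA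
  have hpB : ∀ i, p i B = p i A / 2 := by
    intro i
    have h := hBall (Fin.castAdd d i)
    rwa [Fin.append_left] at h
  have hqB : ∀ i, q i B = q i A / 2 := by
    intro i
    have h := hBall (Fin.natAdd d i)
    rwa [Fin.append_right] at h
  refine ⟨B, hBmeas, hBA, ?_⟩
  apply b.ext_elem
  intro i
  have htr : ∀ x : ℝ≥0∞, (x / 2).toReal = x.toReal / 2 := by
    intro x
    rw [ENNReal.toReal_div]
    norm_num
  have hcoord : ∀ (x : X), b.repr x i = b.coord i x := fun x => (Module.Basis.coord_apply b i x).symm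
  rw [hcoord, hcoord, ← hσ i B, _root_.map_smul, smul_eq_mul, ← hσ i A,
    hval i B hBmeas, hval i A hA, hpB, hqB, htr, htr]
  ring
end

section
/- Let (Ω, Σ) be a measurable space, X a finite-dimensional normed space, and μ : Σ → X an atomless σ-additive vector measure. Then μ is dividing: for every A ∈ Σ there exists a partition A = B ⊔ C into disjoint measurable sets with μ(B) = μ(C). -/
open MeasureTheory Set
open scoped ENNReal InnerProductSpace

section Auxiliary

variable {Ω : Type*} [MeasurableSpace Ω]





/-- Atomlessness of a positive measure, in the "no atoms" sense. -/
def MAtomless (m : Measure Ω) : Prop :=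
  ∀ E, MeasurableSet E → m E ≠ 0 → ∃ F, MeasurableSet F ∧ F ⊆ E ∧ m F ≠ 0 ∧ m (E \ F) ≠ 0

lemma exists_pieces {m : Measure Ω} (hm : MAtomless m) (k : ℕ) :
    ∀ E, MeasurableSet E → m E ≠ 0 →
    ∃ F : Fin (k + 1) → Set Ω, (∀ j, MeasurableSet (F j)) ∧ (∀ j, F j ⊆ E) ∧
      (∀ j, m (F j) ≠ 0) ∧ ∀ j j', j ≠ j' → Disjoint (F j) (F j') := by
  induction k with
  | zero =>
    intro E hE h0
    refine ⟨fun _ => E, fun _ => hE, fun _ => le_rfl, fun _ => h0, fun j j' hjj' => ?_⟩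
    exact absurd (by omega : j = j') hjj'
  | succ k ih =>
    intro E hE h0
    obtain ⟨F0, hF0m, hF0s, hF0, hE0⟩ := hm E hE h0
    obtain ⟨F, h1, h2, h3, h4⟩ := ih (E \ F0) (hE.diff hF0m) hE0
    refine ⟨Fin.cons F0 F, ?_, ?_, ?_, ?_⟩
    · intro j
      refine Fin.cases ?_ ?_ j <;> simp [hF0m, h1]
    · intro j
      refine Fin.cases ?_ ?_ j
      · simpa using hF0s
      · intro i; simpa using (h2 i).trans diff_subset
    · intro j
      refine Fin.cases ?_ ?_ j <;> simp [hF0, h3]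
    · intro j j'
      refine Fin.cases ?_ ?_ j <;> [skip; intro i] <;> refine Fin.cases ?_ ?_ j' <;>
        simp only [Fin.cons_zero, Fin.cons_succ, ne_eq]
      · intro h; simp at h
      · intro i' _
        exact disjoint_sdiff_right.mono_right (h2 i')
      · intro _
        exact (disjoint_sdiff_right.mono_right (h2 i)).symm
      · intro i' hne
        exact h4 i i' (fun hii' => hne (by rw [hii']))



lemma integral_indicator_one' {m : Measure Ω} [IsFiniteMeasure m] {A : Set Ω}
    (hA : MeasurableSet A) (B : Set Ω) :
    ∫ x in B, A.indicator (fun _ => (1 : ℝ)) x ∂m = (m (B ∩ A)).toReal := by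
  rw [setIntegral_indicator hA, setIntegral_const, smul_eq_mul, mul_one]; rfl

lemma bridge_fwd {m : Measure Ω} [IsFiniteMeasure m] {A : Set Ω} (hA : MeasurableSet A)
    {u : Ω → ℝ} (hu : Integrable u m)
    (h : ∀ B, MeasurableSet B →
      0 ≤ ∫ x in B, u x ∂m ∧ ∫ x in B, u x ∂m ≤ (m (B ∩ A)).toReal) :
    0 ≤ᵐ[m] u ∧ u ≤ᵐ[m] A.indicator (fun _ => (1 : ℝ)) := by
  have hind : Integrable (A.indicator (fun _ => (1 : ℝ))) m :=
    (integrable_const (1 : ℝ)).indicator hA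
  constructor
  · exact ae_nonneg_of_forall_setIntegral_nonneg hu fun B hB _ => (h B hB).1
  · have := ae_nonneg_of_forall_setIntegral_nonneg (hind.sub hu) ?_
    · filter_upwards [this] with x hx
      have : (0:ℝ) ≤ A.indicator (fun _ => (1:ℝ)) x - u x := hx
      linarith
    · intro B hB _
      have : ∫ x in B, ((A.indicator fun _ => (1:ℝ)) - u) x ∂m
          = (∫ x in B, A.indicator (fun _ => (1:ℝ)) x ∂m) - ∫ x in B, u x ∂m := by
        simp only [Pi.sub_apply]
        exact integral_sub hind.integrableOn hu.integrableOn
      rw [this, integral_indicator_one' hA]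
      linarith [(h B hB).2]

lemma bridge_rev {m : Measure Ω} [IsFiniteMeasure m] {A : Set Ω} (hA : MeasurableSet A)
    {u : Ω → ℝ} (hu : Integrable u m) (h0 : 0 ≤ᵐ[m] u)
    (h1 : u ≤ᵐ[m] A.indicator (fun _ => (1 : ℝ)))
    {B : Set Ω} (hB : MeasurableSet B) :
    0 ≤ ∫ x in B, u x ∂m ∧ ∫ x in B, u x ∂m ≤ (m (B ∩ A)).toReal := by
  have hind : Integrable (A.indicator (fun _ => (1 : ℝ))) m :=
    (integrable_const (1 : ℝ)).indicator hA
  constructor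
  · refine setIntegral_nonneg_ae hB ?_
    filter_upwards [h0] with x hx
    exact fun _ => hx
  · rw [← integral_indicator_one' hA]
    exact setIntegral_mono_ae hu.integrableOn hind.integrableOn h1

variable {m : Measure Ω} [IsFiniteMeasure m]

noncomputable def chiL2 (m : Measure Ω) [IsFiniteMeasure m] {B : Set Ω} (hB : MeasurableSet B) :
    Lp ℝ 2 m := indicatorConstLp 2 hB (measure_ne_top m B) (1 : ℝ)

lemma inner_chiL2 {B : Set Ω} (hB : MeasurableSet B) (g : Lp ℝ 2 m) :
    ⟪chiL2 m hB, g⟫_ℝ = ∫ x in B, g x ∂m := by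
  rw [chiL2, L2.inner_indicatorConstLp_eq_setIntegral_inner]
  simp [RCLike.inner_apply]

lemma inner_chiL2' {B : Set Ω} (hB : MeasurableSet B) (g : Lp ℝ 2 m) :
    ⟪g, chiL2 m hB⟫_ℝ = ∫ x in B, g x ∂m := by
  rw [real_inner_comm]; exact inner_chiL2 hB g

lemma inner_L2_eq (g h : Lp ℝ 2 m) : ⟪g, h⟫_ℝ = ∫ x, g x * h x ∂m := by
  rw [L2.inner_def]; simp [RCLike.inner_apply]
  exact integral_congr_ae (Filter.Eventually.of_forall fun x => mul_comm _ _)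

-- toDual facts
lemma toDual_apply' (g ψ : Lp ℝ 2 m) :
    (InnerProductSpace.toDual ℝ (Lp ℝ 2 m) g) ψ = ⟪g, ψ⟫_ℝ := rfl

lemma toDual_symm_apply' (y : StrongDual ℝ (Lp ℝ 2 m)) (ψ : Lp ℝ 2 m) :
    y ψ = ⟪(InnerProductSpace.toDual ℝ (Lp ℝ 2 m)).symm y, ψ⟫_ℝ := by
  rw [InnerProductSpace.toDual_symm_apply]




instance (s : SignedMeasure Ω) : IsFiniteMeasure s.totalVariation := by
  rw [SignedMeasure.totalVariation]; infer_instance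

lemma abs_apply_le_totalVariation (s : SignedMeasure Ω) {B : Set Ω} (hB : MeasurableSet B) :
    |s B| ≤ (s.totalVariation B).toReal := by
  obtain ⟨P, hP1, hP2, hP3, hpos, hneg⟩ := s.toJordanDecomposition_spec
  have hnn : 0 ≤ s (P ∩ B) := VectorMeasure.nonneg_of_zero_le_restrict s
    (VectorMeasure.zero_le_restrict_subset s hP1 Set.inter_subset_left hP2)
  have hnp : s (Pᶜ ∩ B) ≤ 0 := VectorMeasure.nonpos_of_restrict_le_zero s
    (VectorMeasure.restrict_le_zero_subset s hP1.compl Set.inter_subset_left hP3)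
  have h1 : s.toJordanDecomposition.posPart B = ENNReal.ofReal (s (P ∩ B)) := by
    rw [hpos, SignedMeasure.toMeasureOfZeroLE_apply s hP2 hP1 hB]
    exact congrArg _ (Real.toNNReal_of_nonneg hnn).symm
  have h2 : s.toJordanDecomposition.negPart B = ENNReal.ofReal (-s (Pᶜ ∩ B)) := by
    rw [hneg, SignedMeasure.toMeasureOfLEZero_apply s hP3 hP1.compl hB]
    exact congrArg _ (Real.toNNReal_of_nonneg (by linarith)).symm
  have hsplit : s B = s (P ∩ B) + s (Pᶜ ∩ B) := by
    rw [← VectorMeasure.of_union ?_ (hP1.inter hB) (hP1.compl.inter hB)]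
    · congr 1
      rw [← Set.union_inter_distrib_right, Set.union_compl_self, Set.univ_inter]
    · exact ((disjoint_compl_right (a := P)).mono inf_le_left inf_le_left)
  have hvar : s.totalVariation B = ENNReal.ofReal (s (P ∩ B)) + ENNReal.ofReal (-s (Pᶜ ∩ B)) := by
    rw [SignedMeasure.totalVariation, Measure.add_apply, h1, h2]
  rw [hvar, hsplit, ENNReal.toReal_add ENNReal.ofReal_ne_top ENNReal.ofReal_ne_top,
    ENNReal.toReal_ofReal hnn, ENNReal.toReal_ofReal (by linarith)]
  rw [abs_le]
  constructor <;> linarith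

lemma totalVariation_zero_of_null_subsets (s : SignedMeasure Ω) {E : Set Ω}
    (hE : MeasurableSet E) (h : ∀ C, C ⊆ E → MeasurableSet C → s C = 0) :
    s.totalVariation E = 0 := by
  obtain ⟨P, hP1, hP2, hP3, hpos, hneg⟩ := s.toJordanDecomposition_spec
  have h1 : s.toJordanDecomposition.posPart E = ENNReal.ofReal (s (P ∩ E)) := by
    rw [hpos, SignedMeasure.toMeasureOfZeroLE_apply s hP2 hP1 hE]
    exact congrArg _ (Real.toNNReal_of_nonneg (VectorMeasure.nonneg_of_zero_le_restrict s
      (VectorMeasure.zero_le_restrict_subset s hP1 Set.inter_subset_left hP2))).symm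
  have h2 : s.toJordanDecomposition.negPart E = ENNReal.ofReal (-s (Pᶜ ∩ E)) := by
    rw [hneg, SignedMeasure.toMeasureOfLEZero_apply s hP3 hP1.compl hE]
    refine congrArg _ (Real.toNNReal_of_nonneg ?_).symm
    have := VectorMeasure.nonpos_of_restrict_le_zero (i := Pᶜ ∩ E) s
      (VectorMeasure.restrict_le_zero_subset s hP1.compl Set.inter_subset_left hP3)
    linarith
  rw [SignedMeasure.totalVariation, Measure.add_apply, h1, h2,
    h _ Set.inter_subset_right (hP1.inter hE), h _ Set.inter_subset_right (hP1.compl.inter hE)]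
  simp

noncomputable instance (m : Measure Ω) : LocallyConvexSpace ℝ (WeakDual ℝ (Lp ℝ 2 m)) :=
  WeakBilin.locallyConvexSpace (B := topDualPairing ℝ (Lp ℝ 2 m))

set_option maxHeartbeats 2000000 in
theorem lyapunov_half {n : ℕ} (m : Measure Ω) [IsFiniteMeasure m] (hm : MAtomless m)
    (f : Fin n → Ω → ℝ) (hf : ∀ i, MemLp (f i) 2 m)
    {A : Set Ω} (hA : MeasurableSet A) :
    ∃ B, MeasurableSet B ∧ B ⊆ A ∧
      ∀ i, ∫ x in B, f i x ∂m = (1 / 2) * ∫ x in A, f i x ∂m := by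
  classical
  set H := Lp ℝ 2 m with hH
  set D := InnerProductSpace.toDual ℝ H with hD
  set φ : Fin n → H := fun i => ((hf i).toLp (f i)) with hφ
  set c : Fin n → ℝ := fun i => (1 / 2) * ∫ x in A, f i x ∂m with hc
  set K : Set (WeakDual ℝ H) := {x | (∀ B : Set Ω, ∀ hB : MeasurableSet B,
      x (chiL2 m hB) ∈ Icc (0 : ℝ) (m (B ∩ A)).toReal) ∧ ∀ i, x (φ i) = c i} with hK
  have hval : ∀ x : WeakDual ℝ H, ∀ ψ : H,
      x ψ = ⟪(D.symm (WeakDual.toStrongDual x) : H), ψ⟫_ℝ := by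
    intro x ψ
    rw [InnerProductSpace.toDual_symm_apply]
    rfl
  -- closedness
  have hKclosed : IsClosed K := by
    have : K = (⋂ (B : Set Ω) (hB : MeasurableSet B),
        (fun x : WeakDual ℝ H => x (chiL2 m hB)) ⁻¹' (Icc (0 : ℝ) (m (B ∩ A)).toReal)) ∩
        ⋂ i, (fun x : WeakDual ℝ H => x (φ i)) ⁻¹' {c i} := by
      ext x
      simp only [hK, mem_setOf_eq, mem_inter_iff, mem_iInter, mem_preimage, mem_singleton_iff]
    rw [this]
    refine IsClosed.inter (isClosed_iInter fun B => isClosed_iInter fun hB => ?_)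
      (isClosed_iInter fun i => ?_)
    · exact IsClosed.preimage (WeakDual.eval_continuous _) isClosed_Icc
    · exact IsClosed.preimage (WeakDual.eval_continuous _) isClosed_singleton
  -- generic: members of K give a.e.-bounded functions
  have hmem_bounds : ∀ x : WeakDual ℝ H, x ∈ K →
      0 ≤ᵐ[m] ⇑(D.symm (WeakDual.toStrongDual x) : H) ∧
      ⇑(D.symm (WeakDual.toStrongDual x) : H) ≤ᵐ[m] A.indicator (fun _ => (1 : ℝ)) := by
    intro x hx
    set g : H := D.symm (WeakDual.toStrongDual x) with hg
    have hgint : Integrable (⇑g) m := (Lp.memLp g).integrable one_le_two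
    refine bridge_fwd hA hgint ?_
    intro B hB
    have h1 := hx.1 B hB
    rw [hval x (chiL2 m hB), inner_chiL2' hB] at h1
    exact ⟨h1.1, h1.2⟩
  -- boundedness
  have hKbdd : Bornology.IsBounded (⇑StrongDual.toWeakDual ⁻¹' K) := by
    refine (Metric.isBounded_closedBall (x := (0 : StrongDual ℝ H))
      (r := (measureUnivNNReal m : ℝ) ^ ((2 : ℝ≥0∞).toReal)⁻¹ * 1)).subset ?_
    intro y hy
    have hy' : StrongDual.toWeakDual y ∈ K := hy
    obtain ⟨hg0, hg1⟩ := hmem_bounds _ hy'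
    set g : H := D.symm (WeakDual.toStrongDual (StrongDual.toWeakDual y)) with hg
    have hb : ∀ᵐ z ∂m, ‖(g : Ω → ℝ) z‖ ≤ 1 := by
      filter_upwards [hg0, hg1] with z h0 h1
      have h1' : (g : Ω → ℝ) z ≤ A.indicator (fun _ => (1 : ℝ)) z := h1
      have h0' : (0:ℝ) ≤ (g : Ω → ℝ) z := h0
      rw [Real.norm_eq_abs, abs_le]
      constructor
      · linarith
      · by_cases hz : z ∈ A <;> simp [indicator_of_mem, indicator_of_notMem, hz] at h1' <;> linarith
    have hn : ‖g‖ ≤ (measureUnivNNReal m : ℝ) ^ ((2 : ℝ≥0∞).toReal)⁻¹ * 1 :=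
      Lp.norm_le_of_ae_bound zero_le_one hb
    have : ‖y‖ = ‖g‖ := by
      rw [hg]
      have : WeakDual.toStrongDual (StrongDual.toWeakDual y) = y := rfl
      rw [this, LinearIsometryEquiv.norm_map]
    rw [Metric.mem_closedBall, dist_zero_right, this]
    exact hn
  have hKcomp : IsCompact K := WeakDual.isCompact_of_bounded_of_closed hKbdd hKclosed
  -- nonemptiness
  have hKne : K.Nonempty := by
    refine ⟨StrongDual.toWeakDual (D ((1 / 2 : ℝ) • chiL2 m hA)), ?_, ?_⟩
    · intro B hB
      have : (StrongDual.toWeakDual (D ((1 / 2 : ℝ) • chiL2 m hA))) (chiL2 m hB)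
          = (1 / 2 : ℝ) * ∫ x in A, (chiL2 m hB : Ω → ℝ) x ∂m := by
        have h1 : (StrongDual.toWeakDual (D ((1 / 2 : ℝ) • chiL2 m hA))) (chiL2 m hB)
            = ⟪(1 / 2 : ℝ) • chiL2 m hA, chiL2 m hB⟫_ℝ := rfl
        rw [h1, real_inner_smul_left, inner_chiL2 hA]
      rw [this]
      have h2 : ∫ x in A, (chiL2 m hB : Ω → ℝ) x ∂m = (m (B ∩ A)).toReal := by
        rw [inter_comm]
        rw [setIntegral_congr_ae hA (by
          filter_upwards [indicatorConstLp_coeFn (p := 2) (hs := hB)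
            (hμs := measure_ne_top m B) (c := (1:ℝ))] with z hz
          exact fun _ => hz)]
        exact integral_indicator_one' hB A
      rw [h2]
      constructor
      · positivity
      · have h3 : (0:ℝ) ≤ (m (B ∩ A)).toReal := ENNReal.toReal_nonneg
        linarith
    · intro i
      have h1 : (StrongDual.toWeakDual (D ((1 / 2 : ℝ) • chiL2 m hA))) (φ i)
          = ⟪(1 / 2 : ℝ) • chiL2 m hA, φ i⟫_ℝ := rfl
      rw [h1, real_inner_smul_left, inner_chiL2 hA]
      have h2 : ∫ x in A, (φ i : Ω → ℝ) x ∂m = ∫ x in A, f i x ∂m :=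
        setIntegral_congr_ae hA (by
          filter_upwards [(hf i).coeFn_toLp] with z hz
          exact fun _ => hz)
      rw [h2]
  obtain ⟨xe, hxe⟩ := hKcomp.extremePoints_nonempty hKne
  have hxeK : xe ∈ K := hxe.1
  set g : H := D.symm (WeakDual.toStrongDual xe) with hg
  obtain ⟨hg0, hg1⟩ := hmem_bounds xe hxeK
  have hgint : Integrable (⇑g) m := (Lp.memLp g).integrable one_le_two
  have hgmeas : Measurable (⇑g : Ω → ℝ) := (Lp.stronglyMeasurable g).measurable
  -- the key null sets
  have hnull : ∀ k : ℕ,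
      m (A ∩ {x | 1 / (k + 2 : ℝ) ≤ (g : Ω → ℝ) x ∧ (g : Ω → ℝ) x ≤ 1 - 1 / (k + 2 : ℝ)}) = 0 := by
    intro k
    by_contra hk
    set ε : ℝ := 1 / (k + 2 : ℝ) with hε
    have hεpos : 0 < ε := by positivity
    set E : Set Ω := A ∩ {x | ε ≤ (g : Ω → ℝ) x ∧ (g : Ω → ℝ) x ≤ 1 - ε} with hE
    have hEmeas : MeasurableSet E := by
      refine hA.inter ?_
      have : {x | ε ≤ (g : Ω → ℝ) x ∧ (g : Ω → ℝ) x ≤ 1 - ε} = (⇑g) ⁻¹' (Icc ε (1 - ε)) := rfl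
      rw [this]
      exact hgmeas (measurableSet_Icc)
    obtain ⟨F, hFmeas, hFsub, hFpos, hFdisj⟩ := exists_pieces hm n E hEmeas hk
    set v : Fin (n + 1) → (Fin n → ℝ) := fun j => fun i => ∫ x in F j, f i x ∂m with hv
    have hdep : ¬ LinearIndependent ℝ v := by
      intro hli
      have hcard := hli.fintype_card_le_finrank
      rw [Module.finrank_fintype_fun_eq_card, Fintype.card_fin, Fintype.card_fin] at hcard
      omega
    obtain ⟨cc, hcc, j0, hj0⟩ := Fintype.not_linearIndependent_iff.1 hdep
    set M : ℝ := ∑ j, |cc j| with hM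
    have hccleM : ∀ j, |cc j| ≤ M := by
      intro j
      exact Finset.single_le_sum (fun j' _ => abs_nonneg (cc j')) (Finset.mem_univ j)
    have hMpos : 0 < M := lt_of_lt_of_le (abs_pos.2 hj0) (hccleM j0)
    set d : Fin (n + 1) → ℝ := fun j => (ε / M) * cc j with hd
    have hdle : ∀ j, |d j| ≤ ε := by
      intro j
      rw [hd]
      simp only [abs_mul]
      rw [abs_of_pos (by positivity : (0:ℝ) < ε / M)]
      calc (ε / M) * |cc j| ≤ (ε / M) * M := by
            exact mul_le_mul_of_nonneg_left (hccleM j) (by positivity)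
        _ = ε := by field_simp
    set h : Ω → ℝ := fun x => ∑ j, (F j).indicator (fun _ => d j) x with hhdef
    have hhmeas : Measurable h := by
      refine Finset.measurable_sum _ fun j _ => ?_
      exact measurable_const.indicator (hFmeas j)
    have hhbd : ∀ x, ‖h x‖ ≤ ∑ j, |d j| := by
      intro x
      rw [Real.norm_eq_abs, hhdef]
      refine (Finset.abs_sum_le_sum_abs _ _).trans ?_
      refine Finset.sum_le_sum fun j _ => ?_
      by_cases hx : x ∈ F j
      · rw [indicator_of_mem hx]
      · rw [indicator_of_notMem hx]; simp [abs_nonneg]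
    have hhmem : MemLp h 2 m :=
      MemLp.of_bound hhmeas.aestronglyMeasurable _ (Filter.Eventually.of_forall hhbd)
    have hhint : Integrable h m := hhmem.integrable one_le_two
    set η : H := hhmem.toLp h with hη
    -- pointwise structure of h
    have hpt : ∀ x, h x = 0 ∨ (x ∈ E ∧ |h x| ≤ ε) := by
      intro x
      by_cases hx : ∃ j, x ∈ F j
      · obtain ⟨j, hj⟩ := hx
        right
        refine ⟨hFsub j hj, ?_⟩
        have : h x = d j := by
          simp only [hhdef]
          rw [Finset.sum_eq_single_of_mem j (Finset.mem_univ j)]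
          · exact indicator_of_mem hj _
          · intro j' _ hj'
            refine indicator_of_notMem ?_ _
            exact fun hx' => (hFdisj j' j hj').le_bot ⟨hx', hj⟩
        rw [this]; exact hdle j
      · left
        simp only [hhdef]
        refine Finset.sum_eq_zero fun j _ => ?_
        exact indicator_of_notMem (fun hx' => hx ⟨j, hx'⟩) _
    -- a.e. bounds for g ± h
    have hghpm : ∀ s : ℝ, s = 1 ∨ s = -1 →
        (0 ≤ᵐ[m] fun x => (g : Ω → ℝ) x + s * h x) ∧
        ((fun x => (g : Ω → ℝ) x + s * h x) ≤ᵐ[m] A.indicator (fun _ => (1 : ℝ))) := by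
      intro s hs
      have hsabs : |s| = 1 := by rcases hs with rfl | rfl <;> simp
      constructor
      · filter_upwards [hg0, hg1] with x h0 h1
        rcases hpt x with hx | ⟨hxE, hxb⟩
        · have h0' : (0:ℝ) ≤ (g : Ω → ℝ) x := h0
          simp only [hx, mul_zero, add_zero]
          exact h0'
        · have hgx : ε ≤ (g : Ω → ℝ) x := hxE.2.1
          have : |s * h x| ≤ ε := by rw [abs_mul, hsabs, one_mul]; exact hxb
          have := abs_le.1 this
          simp only [Pi.zero_apply]
          linarith
      · filter_upwards [hg0, hg1] with x h0 h1
        rcases hpt x with hx | ⟨hxE, hxb⟩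
        · have h1' : (g : Ω → ℝ) x ≤ A.indicator (fun _ => (1 : ℝ)) x := h1
          simp only [hx, mul_zero, add_zero]
          exact h1'
        · have hgx : (g : Ω → ℝ) x ≤ 1 - ε := hxE.2.2
          have : |s * h x| ≤ ε := by rw [abs_mul, hsabs, one_mul]; exact hxb
          have habs := abs_le.1 this
          have hxA : x ∈ A := hxE.1
          rw [indicator_of_mem hxA]
          linarith
    -- η's evaluations
    have hηφ : ∀ i, ⟪η, φ i⟫_ℝ = 0 := by
      intro i
      have e1 : ⟪η, φ i⟫_ℝ = ∫ x, (η : Ω → ℝ) x * (φ i : Ω → ℝ) x ∂m := inner_L2_eq η (φ i)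
      have e2 : ∫ x, (η : Ω → ℝ) x * (φ i : Ω → ℝ) x ∂m = ∫ x, h x * f i x ∂m := by
        refine integral_congr_ae ?_
        filter_upwards [hhmem.coeFn_toLp, (hf i).coeFn_toLp] with x hx1 hx2
        rw [hx1, hx2]
      have e3 : ∫ x, h x * f i x ∂m = ∑ j, d j * ∫ x in F j, f i x ∂m := by
        have : (fun x => h x * f i x) = fun x => ∑ j, (F j).indicator (fun y => d j * f i y) x := by
          funext x
          rw [hhdef, Finset.sum_mul]
          congr 1
          funext j
          by_cases hx : x ∈ F j
          · rw [indicator_of_mem hx, indicator_of_mem hx]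
          · rw [indicator_of_notMem hx, indicator_of_notMem hx, zero_mul]
        rw [this, integral_finset_sum]
        · refine Finset.sum_congr rfl fun j _ => ?_
          rw [integral_indicator (hFmeas j), ← integral_const_mul]
        · intro j _
          exact ((((hf i).integrable one_le_two).const_mul (d j)).indicator (hFmeas j))
      have e4 : ∑ j, d j * ∫ x in F j, f i x ∂m = (ε / M) * ∑ j, cc j * v j i := by
        rw [Finset.mul_sum]
        refine Finset.sum_congr rfl fun j _ => ?_
        rw [hd, hv]
        ring
      have e5 : ∑ j, cc j * v j i = 0 := by
        have := congrFun hcc i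
        simpa [Finset.sum_apply] using this
      rw [e1, e2, e3, e4, e5, mul_zero]
    have hηχ : ∀ (B : Set Ω) (hB : MeasurableSet B), ⟪η, chiL2 m hB⟫_ℝ = ∫ x in B, h x ∂m := by
      intro B hB
      rw [inner_chiL2' hB]
      exact setIntegral_congr_ae hB (by
        filter_upwards [hhmem.coeFn_toLp] with x hx
        exact fun _ => hx)
    -- the two perturbations belong to K
    have hpert : ∀ s : ℝ, s = 1 ∨ s = -1 →
        (xe + s • (StrongDual.toWeakDual (D η))) ∈ K := by
      intro s hs
      have heval : ∀ ψ : H, (xe + s • (StrongDual.toWeakDual (D η))) ψ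
          = xe ψ + s * ⟪η, ψ⟫_ℝ := by
        intro ψ
        rfl
      constructor
      · intro B hB
        rw [heval, hηχ B hB]
        have hxev : xe (chiL2 m hB) = ∫ x in B, (g : Ω → ℝ) x ∂m := by
          rw [hval xe (chiL2 m hB), inner_chiL2' hB]
        rw [hxev]
        have hint : Integrable (fun x => (g : Ω → ℝ) x + s * h x) m :=
          hgint.add (hhint.const_mul s)
        have hsum : ∫ x in B, (g : Ω → ℝ) x ∂m + s * ∫ x in B, h x ∂m
            = ∫ x in B, ((g : Ω → ℝ) x + s * h x) ∂m := by
          rw [integral_add hgint.integrableOn ((hhint.const_mul s).integrableOn)]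
          rw [integral_const_mul]
        rw [hsum]
        obtain ⟨hb0, hb1⟩ := hghpm s hs
        exact ⟨(bridge_rev hA hint hb0 hb1 hB).1, (bridge_rev hA hint hb0 hb1 hB).2⟩
      · intro i
        rw [heval, hηφ i, mul_zero, add_zero]
        exact hxeK.2 i
    have hp := hpert 1 (Or.inl rfl)
    have hmn := hpert (-1) (Or.inr rfl)
    simp only [one_smul] at hp
    have hseg : xe ∈ openSegment ℝ (xe + (-1 : ℝ) • (StrongDual.toWeakDual (D η)))
        (xe + StrongDual.toWeakDual (D η)) := by
      refine ⟨1/2, 1/2, by norm_num, by norm_num, by norm_num, ?_⟩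
      module
    obtain ⟨_, hright⟩ := (mem_extremePoints.1 hxe).2 _ hmn _ hp hseg
    have hη0 : StrongDual.toWeakDual (D η) = 0 := by
      have := congrArg (fun z => z - xe) hright
      simpa using this
    have hη0' : η = 0 := by
      have h1 : D η = 0 := by
        have : WeakDual.toStrongDual (StrongDual.toWeakDual (D η)) = D η := rfl
        rw [← this, hη0]
        rfl
      have h2 : D η = D 0 := by rw [h1, map_zero]
      exact D.injective h2
    have hae : h =ᵐ[m] 0 := by
      have h1 : ⇑η =ᵐ[m] h := hhmem.coeFn_toLp
      have h2 : ⇑η =ᵐ[m] 0 := by rw [hη0']; exact Lp.coeFn_zero _ _ _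
      exact h1.symm.trans h2
    have : m (F j0) = 0 := by
      have hae' : ∀ᵐ x ∂m, h x = 0 := by
        filter_upwards [hae] with x hx
        simpa using hx
      have hnullset : m {x | ¬ h x = 0} = 0 := by
        simpa [ae_iff] using hae'
      refine measure_mono_null ?_ hnullset
      intro x hx
      have : h x = d j0 := by
        simp only [hhdef]
        rw [Finset.sum_eq_single_of_mem j0 (Finset.mem_univ j0)]
        · exact indicator_of_mem hx _
        · intro j' _ hj'
          exact indicator_of_notMem (fun hx' => (hFdisj j' j0 hj').le_bot ⟨hx', hx⟩) _
      have hdj0 : d j0 ≠ 0 := by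
        rw [hd]
        exact mul_ne_zero (by positivity) hj0
      simp only [mem_setOf_eq]
      rw [this]
      exact hdj0
    exact hFpos j0 this
  -- define the final set
  set B : Set Ω := A ∩ {x | (1/2 : ℝ) ≤ (g : Ω → ℝ) x} with hBdef
  have hBmeas : MeasurableSet B := hA.inter (hgmeas measurableSet_Ici)
  have hBA : B ⊆ A := inter_subset_left
  refine ⟨B, hBmeas, hBA, ?_⟩
  -- show indicator B 1 =ᵐ g
  have hind : (B.indicator (fun _ => (1:ℝ))) =ᵐ[m] ⇑g := by
    have hUnull : ∀ᵐ x ∂m, ∀ k : ℕ,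
        x ∉ A ∩ {x | 1 / (k + 2 : ℝ) ≤ (g : Ω → ℝ) x ∧ (g : Ω → ℝ) x ≤ 1 - 1 / (k + 2 : ℝ)} := by
      rw [ae_all_iff]
      intro k
      have := hnull k
      exact (measure_eq_zero_iff_ae_notMem (μ := m)).mp this
    filter_upwards [hg0, hg1, hUnull] with x h0 h1 hks
    have h0' : (0:ℝ) ≤ (g : Ω → ℝ) x := h0
    by_cases hxA : x ∈ A
    · have h1' : (g : Ω → ℝ) x ≤ 1 := by
        have := h1
        rw [indicator_of_mem hxA] at this  -- careful: h1 : g x ≤ indicator ...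
        exact this
      have hgval : (g : Ω → ℝ) x = 0 ∨ (g : Ω → ℝ) x = 1 := by
        by_contra hcon
        push_neg at hcon
        obtain ⟨hne0, hne1⟩ := hcon
        have hpos : 0 < (g : Ω → ℝ) x := lt_of_le_of_ne h0' (Ne.symm hne0)
        have hlt1 : (g : Ω → ℝ) x < 1 := lt_of_le_of_ne h1' hne1
        obtain ⟨k, hk⟩ := exists_nat_one_div_lt (show (0:ℝ) < min ((g : Ω → ℝ) x) (1 - (g : Ω → ℝ) x) by
          apply lt_min hpos; linarith)
        refine hks k ⟨hxA, ?_, ?_⟩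
        · have : (1:ℝ)/(k + 2) < 1/(k+1) := by
            apply div_lt_div_of_pos_left one_pos (by positivity)
            push_cast; linarith
          have h2 := lt_min_iff.1 hk
          calc (1:ℝ)/(k+2) ≤ 1/(k+1) := le_of_lt this
            _ ≤ (g : Ω → ℝ) x := le_of_lt (by exact_mod_cast h2.1)
        · have h2 := lt_min_iff.1 hk
          have : (1:ℝ)/(k + 2) ≤ 1 - (g : Ω → ℝ) x := by
            have h3 : (1:ℝ)/(k+2) < 1/(k+1) := by
              apply div_lt_div_of_pos_left one_pos (by positivity)
              push_cast; linarith
            have h4 : (1:ℝ)/(k+1) < 1 - (g : Ω → ℝ) x := by exact_mod_cast h2.2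
            linarith
          linarith
      rcases hgval with hzero | hone
      · have hxB : x ∉ B := by
          rw [hBdef]
          intro hx
          have := hx.2
          simp only [mem_setOf_eq] at this
          rw [hzero] at this
          linarith
        rw [indicator_of_notMem hxB, hzero]
      · have hxB : x ∈ B := ⟨hxA, by simp only [mem_setOf_eq]; rw [hone]; norm_num⟩
        rw [indicator_of_mem hxB, hone]
    · have hxB : x ∉ B := fun hx => hxA (hBA hx)
      have h1' : (g : Ω → ℝ) x ≤ 0 := by
        have := h1
        rw [indicator_of_notMem hxA] at this
        exact this
      rw [indicator_of_notMem hxB]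
      linarith
  -- conclude
  intro i
  have e1 : ∫ x in B, f i x ∂m = ∫ x, B.indicator (f i) x ∂m := (integral_indicator hBmeas).symm
  have e2 : ∫ x, B.indicator (f i) x ∂m = ∫ x, (g : Ω → ℝ) x * f i x ∂m := by
    refine integral_congr_ae ?_
    filter_upwards [hind] with x hx
    have : B.indicator (f i) x = B.indicator (fun _ => (1:ℝ)) x * f i x := by
      by_cases hxB : x ∈ B
      · rw [indicator_of_mem hxB, indicator_of_mem hxB, one_mul]
      · rw [indicator_of_notMem hxB, indicator_of_notMem hxB, zero_mul]
    rw [this, hx]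
  have e3 : ∫ x, (g : Ω → ℝ) x * f i x ∂m = ⟪g, φ i⟫_ℝ := by
    rw [inner_L2_eq]
    refine integral_congr_ae ?_
    filter_upwards [(hf i).coeFn_toLp] with x hx
    rw [hx]
  have e4 : ⟪g, φ i⟫_ℝ = c i := by
    rw [← hval xe (φ i)]
    exact hxeK.2 i
  rw [e1, e2, e3, e4]

end Auxiliary

/-- an atomless σ-additive vector measure with values in a
finite-dimensional normed space is dividing: every measurable set splits into two
disjoint measurable pieces with equal measure. -/
theorem atomless_vectorMeasure_dividing {Ω : Type*} [MeasurableSpace Ω] {X : Type*}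
    [NormedAddCommGroup X] [NormedSpace ℝ X] [FiniteDimensional ℝ X]
    (μ : VectorMeasure Ω X)
    (hatomless : ∀ A : Set Ω, MeasurableSet A → μ A ≠ 0 →
      ∃ B : Set Ω, MeasurableSet B ∧ B ⊆ A ∧ μ B ≠ 0 ∧ μ (A \ B) ≠ 0)
    (A : Set Ω) (hA : MeasurableSet A) :
    ∃ B C : Set Ω, MeasurableSet B ∧ MeasurableSet C ∧
      B ∪ C = A ∧ B ∩ C = ∅ ∧ μ B = μ C := by
  classical
  set n := Module.finrank ℝ X with hn
  set b : Module.Basis (Fin n) ℝ X := Module.finBasis ℝ X with hb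
  set sgn : Fin n → SignedMeasure Ω := fun i =>
    μ.mapRange (b.coord i).toAddMonoidHom ((b.coord i).continuous_of_finiteDimensional) with hsgn
  have hsgn_apply : ∀ i (B : Set Ω), sgn i B = b.coord i (μ B) := fun i B =>
    VectorMeasure.mapRange_apply μ _
  set m : Measure Ω := ∑ i, (sgn i).totalVariation with hm
  haveI hmfin : IsFiniteMeasure m := by
    constructor
    rw [hm, Measure.finset_sum_apply]
    exact ENNReal.sum_lt_top.2 fun i _ => measure_lt_top _ _
  have hcomp : ∀ i (B : Set Ω), (sgn i).totalVariation B ≤ m B := by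
    intro i B
    rw [hm, Measure.finset_sum_apply]
    exact Finset.single_le_sum (f := fun i => (sgn i).totalVariation B)
      (fun _ _ => zero_le) (Finset.mem_univ i)
  have hszero : ∀ i (B : Set Ω), m B = 0 → sgn i B = 0 := fun i B h =>
    (sgn i).null_of_totalVariation_zero (le_antisymm (h ▸ hcomp i B) zero_le)
  have hrepr : ∀ B : Set Ω, μ B = ∑ i, (sgn i B) • b i := by
    intro B
    conv_lhs => rw [← b.sum_repr (μ B)]
    refine Finset.sum_congr rfl fun i _ => ?_
    rw [hsgn_apply i B, Module.Basis.coord_apply]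
  have hμzero : ∀ B : Set Ω, m B = 0 → μ B = 0 := by
    intro B h
    rw [hrepr B]
    refine Finset.sum_eq_zero fun i _ => ?_
    rw [hszero i B h, zero_smul]
  have hvar_zero : ∀ E : Set Ω, MeasurableSet E →
      (∀ C, C ⊆ E → MeasurableSet C → μ C = 0) → m E = 0 := by
    intro E hE h
    rw [hm, Measure.finset_sum_apply]
    refine Finset.sum_eq_zero fun i _ => ?_
    refine totalVariation_zero_of_null_subsets (sgn i) hE fun C hCE hC => ?_
    rw [hsgn_apply i C, h C hCE hC, map_zero]
  have hmatomless : MAtomless m := by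
    intro E hE hmE
    have hsome : ∃ C, MeasurableSet C ∧ C ⊆ E ∧ μ C ≠ 0 := by
      by_contra hno
      push_neg at hno
      exact hmE (hvar_zero E hE fun C hCE hC => hno C hC hCE)
    obtain ⟨C, hCmeas, hCE, hμC⟩ := hsome
    obtain ⟨F, hFmeas, hFC, hμF, hμCF⟩ := hatomless C hCmeas hμC
    refine ⟨F, hFmeas, hFC.trans hCE, ?_, ?_⟩
    · intro h0; exact hμF (hμzero F h0)
    · intro h0
      refine hμCF (hμzero _ ?_)
      refine le_antisymm (le_trans (measure_mono ?_) (le_of_eq h0)) zero_le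
      exact diff_subset_diff_left hCE
  -- densities
  have hac : ∀ i, sgn i ≪ᵥ m.toENNRealVectorMeasure := by
    intro i
    refine VectorMeasure.AbsolutelyContinuous.mk fun C hC h0 => ?_
    rw [Measure.toENNRealVectorMeasure_apply_measurable hC] at h0
    exact hszero i C h0
  set f : Fin n → Ω → ℝ := fun i => (sgn i).rnDeriv m with hf
  have hfs : ∀ i (B : Set Ω), MeasurableSet B → ∫ x in B, f i x ∂m = sgn i B := by
    intro i B hB
    conv_rhs => rw [← SignedMeasure.withDensityᵥ_rnDeriv_eq (sgn i) m (hac i)]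
    rw [withDensityᵥ_apply (SignedMeasure.integrable_rnDeriv _ _) hB]
  have habs : ∀ i (B : Set Ω), MeasurableSet B → |sgn i B| ≤ (m B).toReal := by
    intro i B hB
    refine (abs_apply_le_totalVariation (sgn i) hB).trans ?_
    exact ENNReal.toReal_mono (measure_ne_top m B) (hcomp i B)
  have hfint : ∀ i, Integrable (f i) m := fun i => SignedMeasure.integrable_rnDeriv _ _
  have hbdd : ∀ i, ∀ᵐ x ∂m, ‖f i x‖ ≤ 1 := by
    intro i
    have h1 : 0 ≤ᵐ[m] fun x => 1 - f i x := by
      refine ae_nonneg_of_forall_setIntegral_nonneg ((integrable_const 1).sub (hfint i)) ?_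
      intro C hC _
      have : ∫ x in C, (1 - f i x) ∂m = (m C).toReal - ∫ x in C, f i x ∂m := by
        rw [integral_sub (integrable_const 1).integrableOn (hfint i).integrableOn]
        congr 1
        rw [setIntegral_const, smul_eq_mul, mul_one]; rfl
      rw [this, hfs i C hC]
      have := (abs_le.1 (habs i C hC)).2
      linarith
    have h2 : 0 ≤ᵐ[m] fun x => 1 + f i x := by
      refine ae_nonneg_of_forall_setIntegral_nonneg ((integrable_const 1).add (hfint i)) ?_
      intro C hC _
      have : ∫ x in C, (1 + f i x) ∂m = (m C).toReal + ∫ x in C, f i x ∂m := by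
        rw [integral_add (integrable_const 1).integrableOn (hfint i).integrableOn]
        congr 1
        rw [setIntegral_const, smul_eq_mul, mul_one]; rfl
      rw [this, hfs i C hC]
      have := (abs_le.1 (habs i C hC)).1
      linarith
    filter_upwards [h1, h2] with x hx1 hx2
    have hx1' : (0:ℝ) ≤ 1 - f i x := hx1
    have hx2' : (0:ℝ) ≤ 1 + f i x := hx2
    rw [Real.norm_eq_abs, abs_le]
    constructor <;> linarith
  have hmem : ∀ i, MemLp (f i) 2 m := fun i =>
    MemLp.of_bound (SignedMeasure.measurable_rnDeriv _ _).aestronglyMeasurable 1 (hbdd i)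
  obtain ⟨B, hBmeas, hBA, hBint⟩ := lyapunov_half m hmatomless f hmem hA
  have hsB : ∀ i, sgn i B = sgn i (A \ B) := by
    intro i
    have hsplit : sgn i A = sgn i B + sgn i (A \ B) := by
      rw [← VectorMeasure.of_union disjoint_sdiff_right hBmeas (hA.diff hBmeas)]
      congr 1
      rw [union_diff_cancel hBA]
    have h1 : sgn i B = 1 / 2 * sgn i A := by
      rw [← hfs i B hBmeas, hBint i, hfs i A hA]
    rw [h1] at hsplit ⊢
    linarith
  refine ⟨B, A \ B, hBmeas, hA.diff hBmeas, union_diff_cancel hBA, ?_, ?_⟩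
  · ext x; simp only [mem_inter_iff, mem_diff, mem_empty_iff_false, iff_false]
    tauto
  · rw [hrepr B, hrepr (A \ B)]
    exact Finset.sum_congr rfl fun i _ => by rw [hsB i]
end
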